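/- arXiv:1303.4580 — 6 statements merged into one kernel-verified Lean document; each statement's English description precedes it below -/
import Mathlib

section
/- Every planar graph G with girth at least 7 and maximum degree Δ ≥ 4 satisfies χ'_s(G) ≤ 3Δ, assuming that planar graphs of girth at least 5 and maximum degree Δ ≥ 4 have chromatic index Δ, and that planar graphs of girth at least 4 (triangle-free) are 3-vertex-colorable (Grötzsch's theorem). -/
open SimpleGraph Finset

universe u

variable {V : Type u}

/-- Two edges are at distance at most 2 (in the line graph sense): they share an
endpoint or some endpoint of one is adjacent to an endpoint of the other. -/
def edgesConflict (G : SimpleGraph V) (e f : Sym2 V) : Prop :=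
  ∃ a b, a ∈ e ∧ b ∈ f ∧ (a = b ∨ G.Adj a b)

/-- A strong edge coloring: distinct edges at distance at most 2 get distinct colors. -/
def IsStrongEdgeColoring (G : SimpleGraph V) {n : ℕ} (c : G.edgeSet → Fin n) : Prop :=
  ∀ e f : G.edgeSet, e ≠ f → edgesConflict G e.1 f.1 → c e ≠ c f

def HasStrongEdgeColoring (G : SimpleGraph V) (n : ℕ) : Prop :=
  ∃ c : G.edgeSet → Fin n, IsStrongEdgeColoring G c

/-- The strong chromatic index. -/
noncomputable def strongChromaticIndex (G : SimpleGraph V) : ℕ :=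
  sInf { n | HasStrongEdgeColoring G n }

/-- A proper edge coloring: distinct edges sharing an endpoint get distinct colors. -/
def IsProperEdgeColoring (G : SimpleGraph V) {n : ℕ} (c : G.edgeSet → Fin n) : Prop :=
  ∀ e f : G.edgeSet, e ≠ f → (∃ a, a ∈ e.1 ∧ a ∈ f.1) → c e ≠ c f

/-- The edge chromatic number (chromatic index). -/
noncomputable def edgeChromaticNumber (G : SimpleGraph V) : ℕ :=
  sInf { n | ∃ c : G.edgeSet → Fin n, IsProperEdgeColoring G c }

/-- `G` has `H` as a minor: disjoint nonempty connected branch sets, one per vertex of `H`,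
with edges of `G` between branch sets corresponding to edges of `H`. -/
def HasMinor {W : Type} (G : SimpleGraph V) (H : SimpleGraph W) : Prop :=
  ∃ b : W → Set V, (∀ w, (b w).Nonempty) ∧ (∀ w, (G.induce (b w)).Connected) ∧
    (Pairwise fun w₁ w₂ => Disjoint (b w₁) (b w₂)) ∧
    ∀ ⦃w₁ w₂⦄, H.Adj w₁ w₂ → ∃ a ∈ b w₁, ∃ a' ∈ b w₂, G.Adj a a'

/-- Planarity, via Wagner's theorem: no `K₅` minor and no `K₃,₃` minor. -/
def IsPlanar (G : SimpleGraph V) : Prop :=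
  ¬ HasMinor G (⊤ : SimpleGraph (Fin 5)) ∧ ¬ HasMinor G (completeBipartiteGraph (Fin 3) (Fin 3))

/-!
Fix a proper edge coloring with `Δ` colors. Contracting the matching of one color class yields
a minor of `G`, hence a planar graph, and it is triangle-free: a triangle would lift to a closed
trail of length at most six in `G`. A Grötzsch coloring of the contracted graph gives different
colors to the contracted images of any two edges of that class at distance at most two, so
pairing the edge color with this vertex color is a strong edge coloring with `3Δ` colors.
-/

section Contraction

variable {U : Type*} {G : SimpleGraph V} {f : V → U}

namespace SimpleGraph

lemma reachable_induce_preimage_of_map_eq (hf : ∀ ⦃x y⦄, f x = f y → x = y ∨ G.Adj x y)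
    {B : Set U} {x y : f ⁻¹' B} (hxy : f x = f y) : (G.induce (f ⁻¹' B)).Reachable x y := by
  rcases hf hxy with h | h
  · rw [Subtype.ext h]
  · exact Adj.reachable (induce_adj.2 h)

lemma reachable_induce_preimage_of_reachable (hf : ∀ ⦃x y⦄, f x = f y → x = y ∨ G.Adj x y)
    {B : Set U} {x y : f ⁻¹' B} (h : ((G.map f).induce B).Reachable ⟨f x, x.2⟩ ⟨f y, y.2⟩) :
    (G.induce (f ⁻¹' B)).Reachable x y := by
  obtain ⟨w⟩ := h
  suffices ∀ (p q : B) (w : ((G.map f).induce B).Walk p q) (x y : f ⁻¹' B),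
      f x = p → f y = q → (G.induce (f ⁻¹' B)).Reachable x y from this _ _ w x y rfl rfl
  intro p q w
  induction w with
  | nil => exact fun x y hx hy => reachable_induce_preimage_of_map_eq hf (hx.trans hy.symm)
  | @cons p r q hpr _ ih =>
    intro x y hx hy
    obtain ⟨-, a, b, hab, ha, hb⟩ := induce_adj.1 hpr
    have haB : a ∈ f ⁻¹' B := by rw [Set.mem_preimage, ha]; exact p.2
    have hbB : b ∈ f ⁻¹' B := by rw [Set.mem_preimage, hb]; exact r.2
    have hxa := reachable_induce_preimage_of_map_eq hf (x := x) (y := ⟨a, haB⟩) (hx.trans ha.symm)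
    exact (hxa.trans (Adj.reachable (induce_adj.2 hab))).trans (ih ⟨b, hbB⟩ y hb hy)

lemma Connected.induce_preimage_of_map (hs : Function.Surjective f)
    (hf : ∀ ⦃x y⦄, f x = f y → x = y ∨ G.Adj x y) {B : Set U}
    (h : ((G.map f).induce B).Connected) : (G.induce (f ⁻¹' B)).Connected := by
  obtain ⟨⟨u, hu⟩⟩ := h.nonempty
  obtain ⟨x, rfl⟩ := hs u
  have : Nonempty (f ⁻¹' B) := ⟨⟨x, hu⟩⟩
  exact Connected.mk fun x y => reachable_induce_preimage_of_reachable hf (h.preconnected _ _)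

lemma exists_walk_of_map_eq (hf : ∀ ⦃x y⦄, f x = f y → x = y ∨ G.Adj x y) {x y : V}
    (hxy : f x = f y) :
    ∃ w : G.Walk x y, w.length ≤ 1 ∧ (w.edges.map (Sym2.map f)).Sublist [s(f x, f x)] := by
  rcases hf hxy with rfl | h
  · exact ⟨Walk.nil, by simp, by simp⟩
  · exact ⟨h.toWalk, by simp, by simp [hxy]⟩

/-- A triangle of `G.map f` lifts to a closed trail of length at most six in `G`: three edges
between the fibres, joined inside the fibres by at most one edge each. -/
lemma cliqueFree_three_map (hf : ∀ ⦃x y⦄, f x = f y → x = y ∨ G.Adj x y) (hg : 7 ≤ G.egirth) :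
    (G.map f).CliqueFree 3 := by
  classical
  intro t ht
  obtain ⟨p, q, r, hpq, hpr, hqr, -⟩ := is3Clique_iff.1 ht
  obtain ⟨hpq, a₁, b₂, h₁, ha₁, hb₂⟩ := hpq
  obtain ⟨hqr, a₂, b₃, h₂, ha₂, hb₃⟩ := hqr
  obtain ⟨hrp, a₃, b₁, h₃, ha₃, hb₁⟩ := hpr.symm
  obtain ⟨l₂, hl₂, hl₂e⟩ := exists_walk_of_map_eq hf (hb₂.trans ha₂.symm)
  obtain ⟨l₃, hl₃, hl₃e⟩ := exists_walk_of_map_eq hf (hb₃.trans ha₃.symm)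
  obtain ⟨l₁, hl₁, hl₁e⟩ := exists_walk_of_map_eq hf (hb₁.trans ha₁.symm)
  let w : G.Walk a₁ a₁ := .cons h₁ (l₂.append (.cons h₂ (l₃.append (.cons h₃ l₁))))
  have himage : (w.edges.map (Sym2.map f)).Sublist
      [s(p, q), s(q, q), s(q, r), s(r, r), s(r, p), s(p, p)] := by
    rw [hb₂] at hl₂e
    rw [hb₃] at hl₃e
    rw [hb₁] at hl₁e
    simp only [w, Walk.edges_cons, Walk.edges_append, List.map_cons, List.map_append,
      Sym2.map_mk, ha₁, ha₂, ha₃, hb₁, hb₂, hb₃]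
    exact (hl₂e.append ((hl₃e.append (hl₁e.cons_cons _)).cons_cons _)).cons_cons _
  have hnodup : [s(p, q), s(q, q), s(q, r), s(r, r), s(r, p), s(p, p)].Nodup := by
    simp [hpq, hqr, hrp, hpq.symm, hrp.symm]
  have hcircuit : w.IsCircuit := ⟨⟨(himage.nodup hnodup).of_map _⟩, by simp [w]⟩
  have hlen : w.length ≤ 6 := by
    simp only [w, Walk.length_cons, Walk.length_append]
    omega
  exact absurd (hg.trans (hcircuit.egirth_le_length.trans (Nat.cast_le.2 hlen))) (by decide)

end SimpleGraph

lemma HasMinor.of_map {W : Type} {K : SimpleGraph W} (hs : Function.Surjective f)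
    (hf : ∀ ⦃x y⦄, f x = f y → x = y ∨ G.Adj x y) (h : HasMinor (G.map f) K) : HasMinor G K := by
  obtain ⟨b, hne, hconn, hdisj, hadj⟩ := h
  refine ⟨fun w => f ⁻¹' b w, fun w => (hne w).preimage hs,
    fun w => (hconn w).induce_preimage_of_map hs hf, fun w₁ w₂ h => (hdisj h).preimage f,
    fun w₁ w₂ h => ?_⟩
  obtain ⟨_, hu, _, hv, -, x, y, hxy, rfl, rfl⟩ := hadj h
  exact ⟨x, hu, y, hv, hxy⟩

lemma IsPlanar.map (hs : Function.Surjective f) (hf : ∀ ⦃x y⦄, f x = f y → x = y ∨ G.Adj x y)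
    (h : IsPlanar G) : IsPlanar (G.map f) :=
  ⟨fun hK => h.1 (hK.of_map hs hf), fun hK => h.2 (hK.of_map hs hf)⟩

end Contraction

section EdgeColoring

variable {G : SimpleGraph V} {n : ℕ} {c : G.edgeSet → Fin n}

lemma IsProperEdgeColoring.eq_of_mem (hc : IsProperEdgeColoring G c) {e f : G.edgeSet}
    (hef : c e = c f) {x : V} (hxe : x ∈ e.1) (hxf : x ∈ f.1) : e = f := by
  by_contra hne
  exact hc e f hne ⟨x, hxe, hxf⟩ hef

/-- Identifies the two endpoints of each edge of color `i`: its quotient map contracts that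
color class, a matching. -/
def colorClassSetoid (hc : IsProperEdgeColoring G c) (i : Fin n) : Setoid V where
  r x y := x = y ∨ ∃ e : G.edgeSet, c e = i ∧ x ∈ e.1 ∧ y ∈ e.1
  iseqv :=
    { refl := fun _ => Or.inl rfl
      symm := by
        rintro x y (rfl | ⟨e, he, hx, hy⟩)
        exacts [Or.inl rfl, Or.inr ⟨e, he, hy, hx⟩]
      trans := by
        rintro x y z (rfl | ⟨e, he, hxe, hye⟩) (rfl | ⟨e', he', hye', hze'⟩)
        · exact Or.inl rfl
        · exact Or.inr ⟨e', he', hye', hze'⟩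
        · exact Or.inr ⟨e, he, hxe, hye⟩
        · rw [hc.eq_of_mem (he.trans he'.symm) hye hye'] at hxe
          exact Or.inr ⟨e', he', hxe, hze'⟩ }

lemma mk_colorClassSetoid_eq_of_mem (hc : IsProperEdgeColoring G c) {e : G.edgeSet} {x y : V}
    (hx : x ∈ e.1) (hy : y ∈ e.1) :
    Quotient.mk (colorClassSetoid hc (c e)) x = Quotient.mk _ y :=
  Quotient.sound (Or.inr ⟨e, rfl, hx, hy⟩)

lemma eq_or_adj_of_mk_colorClassSetoid_eq (hc : IsProperEdgeColoring G c) (i : Fin n)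
    ⦃x y : V⦄ (h : Quotient.mk (colorClassSetoid hc i) x = Quotient.mk _ y) :
    x = y ∨ G.Adj x y := by
  rcases Quotient.exact h with hxy | ⟨e, -, hx, hy⟩
  · exact Or.inl hxy
  · refine or_iff_not_imp_left.2 fun hxy => ?_
    have := e.2
    rwa [(Sym2.mem_and_mem_iff hxy).1 ⟨hx, hy⟩] at this

lemma map_mk_colorClassSetoid_adj (hc : IsProperEdgeColoring G c) {e f : G.edgeSet}
    (hef : e ≠ f) (hcef : c e = c f) (hconf : edgesConflict G e.1 f.1) {x y : V}
    (hx : x ∈ e.1) (hy : y ∈ f.1) :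
    (G.map (Quotient.mk (colorClassSetoid hc (c e)))).Adj ⟦x⟧ ⟦y⟧ := by
  obtain ⟨a, b, ha, hb, rfl | hab⟩ := hconf
  · exact absurd (hc.eq_of_mem hcef ha hb) hef
  -- `hy` gives classes for the color `c f`, hence the detour through `hcef`
  rw [← mk_colorClassSetoid_eq_of_mem hc ha hx, hcef, ← mk_colorClassSetoid_eq_of_mem hc hb hy,
    ← hcef]
  refine map_adj_apply' hab fun hab' => ?_
  rcases Quotient.exact hab' with rfl | ⟨g, hg, hag, hbg⟩
  · exact hab.ne rfl
  · exact hef ((hc.eq_of_mem hg hag ha).symm.trans (hc.eq_of_mem (hg.trans hcef) hbg hb))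

theorem hasStrongEdgeColoring_mul_of_colorable (hc : IsProperEdgeColoring G c) {k : ℕ}
    (hcol : ∀ i, (G.map (Quotient.mk (colorClassSetoid hc i))).Colorable k) :
    HasStrongEdgeColoring G (n * k) := by
  let g i := (hcol i).some
  refine ⟨fun e => finProdFinEquiv (c e, g (c e) ⟦(Quot.out e.1).1⟧),
    fun e f hef hconf heq => ?_⟩
  obtain ⟨hcef, hgef⟩ := Prod.ext_iff.1 (finProdFinEquiv.injective heq)
  refine (g (c e)).valid (map_mk_colorClassSetoid_adj hc hef hcef hconf
    (Sym2.out_fst_mem e.1) (Sym2.out_fst_mem f.1)) ?_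
  dsimp only at hcef hgef
  rw [hgef, hcef]

end EdgeColoring

lemma exists_isProperEdgeColoring_edgeChromaticNumber (G : SimpleGraph V) [Finite G.edgeSet] :
    ∃ c : G.edgeSet → Fin (edgeChromaticNumber G), IsProperEdgeColoring G c :=
  Nat.sInf_mem (s := {n | ∃ c : G.edgeSet → Fin n, IsProperEdgeColoring G c})
    ⟨Nat.card G.edgeSet, Finite.equivFin _, fun _ _ hef _ h => hef ((Finite.equivFin _).injective h)⟩

lemma SimpleGraph.le_egirth_of_le_girth {G : SimpleGraph V} {k : ℕ} (h : k ≤ G.girth) :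
    (k : ℕ∞) ≤ G.egirth :=
  (Nat.cast_le.2 h).trans (ENat.natCast_toNat_le_self _)

/-- Assuming that planar graphs of girth at least 5 with maximum degree `Δ ≥ 4` are class 1
(chromatic index `Δ`), and Grötzsch's theorem (planar triangle-free graphs are
3-colorable), every planar graph of girth at least 7 with maximum degree `Δ ≥ 4`
satisfies `χ'ₛ(G) ≤ 3Δ`. -/
theorem strong_index_girth_seven
    (class1 : ∀ (V : Type) [Fintype V] (G : SimpleGraph V) [DecidableRel G.Adj],
      IsPlanar G → 5 ≤ G.girth → 4 ≤ G.maxDegree → edgeChromaticNumber G = G.maxDegree)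
    (grotzsch : ∀ (V : Type) [Fintype V] (G : SimpleGraph V),
      IsPlanar G → G.CliqueFree 3 → G.Colorable 3) :
    ∀ (V : Type) [Fintype V] (G : SimpleGraph V) [DecidableRel G.Adj] (Δ : ℕ),
      IsPlanar G → 7 ≤ G.girth → G.maxDegree = Δ → 4 ≤ Δ →
      strongChromaticIndex G ≤ 3 * Δ := by
  intro V _ G _ Δ hplanar hgirth hΔ hΔ4
  subst hΔ
  classical
  obtain ⟨c, hc⟩ : ∃ c : G.edgeSet → Fin G.maxDegree, IsProperEdgeColoring G c := by
    rw [← class1 V G hplanar (by omega) hΔ4]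
    exact exists_isProperEdgeColoring_edgeChromaticNumber G
  have hcol (i : Fin G.maxDegree) : (G.map (Quotient.mk (colorClassSetoid hc i))).Colorable 3 :=
    have hfib := eq_or_adj_of_mk_colorClassSetoid_eq hc i
    grotzsch _ _ (hplanar.map Quotient.mk_surjective hfib)
      (cliqueFree_three_map hfib (le_egirth_of_le_girth hgirth))
  rw [mul_comm]
  exact Nat.sInf_le (hasStrongEdgeColoring_mul_of_colorable hc hcol)
end

section
/- The complement of the 6-cycle C_6 (equivalently, the triangular prism graph, i.e. the graph on 6 vertices where each vertex is adjacent to the three vertices not adjacent to it in C_6) is a cubic planar graph with strong chromatic index exactly 9; that is, any two of its 9 edges are at distance at most 2, so all edges must receive distinct colors. -/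
open SimpleGraph Finset

universe u

variable {V : Type u}

/-- The complement of the 6-cycle: vertices `0,…,5`, with `i ~ j` iff
`(i - j) mod 6 ∈ {2, 3, 4}`. -/
def complementC6 : SimpleGraph (Fin 6) where
  Adj i j := (i - j).val = 2 ∨ (i - j).val = 3 ∨ (i - j).val = 4
  symm := ⟨by decide⟩
  loopless := ⟨by decide⟩

instance : DecidableRel complementC6.Adj := fun i j =>
  inferInstanceAs (Decidable ((i - j).val = 2 ∨ (i - j).val = 3 ∨ (i - j).val = 4))

-- auxiliary section to splice above the theorem
section Aux

instance : DecidableRel (completeBipartiteGraph (Fin 3) (Fin 3)).Adj := fun v w =>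
  inferInstanceAs (Decidable (v.isLeft ∧ w.isRight ∨ v.isRight ∧ w.isLeft))

lemma cC6_edgeFinset_card : complementC6.edgeFinset.card = 9 := by decide

lemma cC6_card_edgeSet : Fintype.card complementC6.edgeSet = 9 := by
  rw [← Set.toFinset_card]; exact cC6_edgeFinset_card

lemma K33_edgeFinset_card : (completeBipartiteGraph (Fin 3) (Fin 3)).edgeFinset.card = 9 := by
  decide

lemma K33_no_triangle : ∀ u v w : Fin 3 ⊕ Fin 3,
    (completeBipartiteGraph (Fin 3) (Fin 3)).Adj u v →
    (completeBipartiteGraph (Fin 3) (Fin 3)).Adj v w →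
    (completeBipartiteGraph (Fin 3) (Fin 3)).Adj u w → False := by decide

lemma cC6_conflict_aux : ∀ a b c d : Fin 6, complementC6.Adj a b → complementC6.Adj c d →
    s(a,b) ≠ s(c,d) →
    ∃ x y : Fin 6, (x = a ∨ x = b) ∧ (y = c ∨ y = d) ∧ (x = y ∨ complementC6.Adj x y) := by
  decide

lemma cC6_conflict : ∀ e f : complementC6.edgeSet, e ≠ f →
    edgesConflict complementC6 e.1 f.1 := by
  rintro ⟨e, he⟩ ⟨f, hf⟩ hne
  induction e using Sym2.ind with
  | _ a b =>
  induction f using Sym2.ind with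
  | _ c d =>
  have hab : complementC6.Adj a b := he
  have hcd : complementC6.Adj c d := hf
  have hne' : s(a,b) ≠ s(c,d) := fun h => hne (Subtype.ext h)
  obtain ⟨x, y, hx, hy, hxy⟩ := cC6_conflict_aux a b c d hab hcd hne'
  exact ⟨x, y, by rcases hx with rfl | rfl <;> simp, by rcases hy with rfl | rfl <;> simp, hxy⟩

/-- From pairwise disjointness, membership in two branch sets forces equal indices. -/
lemma mem_mem_eq {W : Type} {b : W → Set (Fin 6)}
    (hdisj : Pairwise fun w₁ w₂ => Disjoint (b w₁) (b w₂)) {w₁ w₂ : W} {a : Fin 6}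
    (h₁ : a ∈ b w₁) (h₂ : a ∈ b w₂) : w₁ = w₂ := by
  by_contra hne
  exact Set.disjoint_left.mp (hdisj hne) h₁ h₂

lemma cC6_no_K5 : ¬ HasMinor complementC6 (⊤ : SimpleGraph (Fin 5)) := by
  rintro ⟨b, hne, -, hdisj, hadj⟩
  have key : ∀ p : Fin 5 × Fin 5, ∃ a a' : Fin 6,
      p.1 ≠ p.2 → a ∈ b p.1 ∧ a' ∈ b p.2 ∧ complementC6.Adj a a' := by
    intro p
    by_cases hp : p.1 = p.2
    · exact ⟨0, 0, fun h => absurd hp h⟩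
    · obtain ⟨a, ha, a', ha', h⟩ := hadj (show (⊤ : SimpleGraph (Fin 5)).Adj p.1 p.2 from hp)
      exact ⟨a, a', fun _ => ⟨ha, ha', h⟩⟩
  choose F F' hF using key
  set S : Finset (Fin 5 × Fin 5) := Finset.univ.filter (fun p => p.1 < p.2) with hS
  have hScard : S.card = 10 := by decide
  have hmaps : ∀ p ∈ S, s(F p, F' p) ∈ complementC6.edgeFinset := by
    intro p hp
    have hlt : p.1 < p.2 := (Finset.mem_filter.mp hp).2
    have := (hF p hlt.ne).2.2
    simpa [SimpleGraph.mem_edgeFinset] using this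
  have hinj : Set.InjOn (fun p => s(F p, F' p)) S := by
    intro p hp q hq hpq
    have hpl : p.1 < p.2 := (Finset.mem_filter.mp hp).2
    have hql : q.1 < q.2 := (Finset.mem_filter.mp hq).2
    obtain ⟨hp1, hp2, -⟩ := hF p hpl.ne
    obtain ⟨hq1, hq2, -⟩ := hF q hql.ne
    simp only [Sym2.eq_iff] at hpq
    rcases hpq with ⟨h1, h2⟩ | ⟨h1, h2⟩
    · have e1 : p.1 = q.1 := mem_mem_eq hdisj hp1 (h1 ▸ hq1)
      have e2 : p.2 = q.2 := mem_mem_eq hdisj hp2 (h2 ▸ hq2)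
      exact Prod.ext e1 e2
    · have e1 : p.1 = q.2 := mem_mem_eq hdisj hp1 (h1 ▸ hq2)
      have e2 : p.2 = q.1 := mem_mem_eq hdisj hp2 (h2 ▸ hq1)
      exact absurd (e1 ▸ e2 ▸ hpl) (lt_asymm hql)
  have hle : S.card ≤ complementC6.edgeFinset.card :=
    Finset.card_le_card_of_injOn _ hmaps hinj
  rw [hScard, cC6_edgeFinset_card] at hle
  omega

lemma cC6_no_K33 : ¬ HasMinor complementC6 (completeBipartiteGraph (Fin 3) (Fin 3)) := by
  rintro ⟨b, hne, -, hdisj, hadj⟩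
  choose x hx using hne
  have hxinj : Function.Injective x := fun w₁ w₂ h =>
    mem_mem_eq hdisj (hx w₁) (h ▸ hx w₂)
  have hxbij : Function.Bijective x :=
    (Fintype.bijective_iff_injective_and_card x).mpr ⟨hxinj, by decide⟩
  have hsing : ∀ w a, a ∈ b w → a = x w := by
    intro w a ha
    obtain ⟨w', rfl⟩ := hxbij.2 a
    exact congrArg x (mem_mem_eq hdisj ha (hx w')).symm ▸ rfl
  have hhom : ∀ ⦃w₁ w₂⦄, (completeBipartiteGraph (Fin 3) (Fin 3)).Adj w₁ w₂ →
      complementC6.Adj (x w₁) (x w₂) := by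
    intro w₁ w₂ h
    obtain ⟨a, ha, a', ha', hA⟩ := hadj h
    rwa [hsing _ _ ha, hsing _ _ ha'] at hA
  -- the induced map on edges is injective, hence bijective by cardinality
  set K := completeBipartiteGraph (Fin 3) (Fin 3)
  have hmaps : ∀ e ∈ K.edgeFinset, Sym2.map x e ∈ complementC6.edgeFinset := by
    intro e he
    induction e using Sym2.ind with
    | _ u v =>
      simp only [SimpleGraph.mem_edgeFinset, SimpleGraph.mem_edgeSet] at he ⊢
      simpa using hhom he
  have hinj : Set.InjOn (Sym2.map x) K.edgeFinset :=
    fun e _ f _ h => Sym2.map.injective hxinj h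
  have himg : (K.edgeFinset.image (Sym2.map x)) = complementC6.edgeFinset := by
    apply Finset.eq_of_subset_of_card_le
    · intro e he
      obtain ⟨f, hf, rfl⟩ := Finset.mem_image.mp he
      exact hmaps f hf
    · rw [Finset.card_image_of_injOn hinj, K33_edgeFinset_card, cC6_edgeFinset_card]
  -- the triangle 0,2,4 of complementC6 pulls back to a triangle in K₃,₃
  have htri : ∀ p q : Fin 6, complementC6.Adj p q →
      ∃ u v, K.Adj u v ∧ x u = p ∧ x v = q := by
    intro p q hpq
    have : s(p, q) ∈ complementC6.edgeFinset := by
      simp [SimpleGraph.mem_edgeFinset, hpq]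
    rw [← himg] at this
    obtain ⟨e, he, hmap⟩ := Finset.mem_image.mp this
    induction e using Sym2.ind with
    | _ u v =>
      simp only [Sym2.map_pair_eq, Sym2.eq_iff] at hmap
      have hK : K.Adj u v := by simpa [SimpleGraph.mem_edgeFinset] using he
      rcases hmap with ⟨h1, h2⟩ | ⟨h1, h2⟩
      · exact ⟨u, v, hK, h1, h2⟩
      · exact ⟨v, u, hK.symm, h2, h1⟩
  obtain ⟨u₀, u₂, h02, e0, e2⟩ := htri 0 2 (by decide)
  obtain ⟨v₂, v₄, h24, e2', e4⟩ := htri 2 4 (by decide)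
  obtain ⟨w₀, w₄, h04, e0', e4'⟩ := htri 0 4 (by decide)
  have : u₂ = v₂ := hxinj (e2.trans e2'.symm)
  subst this
  have : w₀ = u₀ := hxinj (e0'.trans e0.symm)
  subst this
  have : w₄ = v₄ := hxinj (e4'.trans e4.symm)
  subst this
  exact K33_no_triangle _ _ _ h02 h24 h04

end Aux

/-- The complement of `C₆` is a cubic planar graph in which any two distinct edges are at
distance at most 2 (so all 9 edges need distinct colors), and its strong chromatic index
is exactly 9. -/
theorem complementC6_strong_index :
    (∀ v, complementC6.degree v = 3) ∧ IsPlanar complementC6 ∧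
    (∀ e f : complementC6.edgeSet, e ≠ f → edgesConflict complementC6 e.1 f.1) ∧
    strongChromaticIndex complementC6 = 9 := by
  refine ⟨by decide, ⟨cC6_no_K5, cC6_no_K33⟩, cC6_conflict, ?_⟩
  have h9 : HasStrongEdgeColoring complementC6 9 := by
    classical
    let c := Fintype.equivFinOfCardEq cC6_card_edgeSet
    exact ⟨c, fun e f hef _ h => hef (c.injective h)⟩
  have hlb : ∀ n, HasStrongEdgeColoring complementC6 n → 9 ≤ n := by
    rintro n ⟨c, hc⟩
    have hinj : Function.Injective c := by
      intro e f h
      by_contra hne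
      exact hc e f hne (cC6_conflict e f hne) h
    have := Fintype.card_le_of_injective c hinj
    rw [Fintype.card_fin] at this
    rw [← cC6_card_edgeSet]
    convert this
  have hmem : 9 ∈ {n | HasStrongEdgeColoring complementC6 n} := h9
  exact le_antisymm (Nat.sInf_le hmem) (hlb _ (Nat.sInf_mem ⟨9, hmem⟩))
end

section
/- Let G be a minimal counterexample to the statement that planar graphs with girth ≥ 6 and maximum degree Δ ≥ 4 have strong chromatic index at most 3Δ+6 (minimal with respect to number of edges). Then every vertex of degree 1 in G is adjacent to a vertex of degree at least 5. -/
open SimpleGraph Finset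

universe u

variable {V : Type u}

/-!
Delete the pendant edge `vu`. This keeps planarity and the maximum degree bound, and also the
girth, since a pendant edge lies on no cycle; so by minimality `G - vu` has a strong edge coloring
with `3Δ + 6` colors. The edges of `G - vu` conflicting with `vu` all end at one of the other
neighbours of `u`; if `deg u ≤ 4` there are at most `3Δ` of them, leaving a color free for `vu`.
Deleting `vu` loses no other conflict, because every edge at `v` is `vu` itself.
-/

namespace SimpleGraph

variable {G G' : SimpleGraph V}

theorem HasMinor.mono {W : Type} {H : SimpleGraph W} (hle : G ≤ G') (hm : HasMinor G H) :
    HasMinor G' H := by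
  obtain ⟨b, hne, hconn, hdisj, hadj⟩ := hm
  refine ⟨b, hne, fun w => (hconn w).mono fun _ _ h => hle h, hdisj, fun w₁ w₂ h => ?_⟩
  obtain ⟨a, ha, a', ha', haa'⟩ := hadj h
  exact ⟨a, ha, a', ha', hle haa'⟩

theorem IsPlanar.anti (hle : G ≤ G') (hp : IsPlanar G') : IsPlanar G :=
  ⟨fun hm => hp.1 (hm.mono hle), fun hm => hp.2 (hm.mono hle)⟩

theorem edgesConflict_comm {e f : Sym2 V} : edgesConflict G e f ↔ edgesConflict G f e := by
  constructor <;>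
  · rintro ⟨a, b, ha, hb, hab⟩
    exact ⟨b, a, hb, ha, hab.imp Eq.symm Adj.symm⟩

theorem exists_forall_ne_of_card_lt {α : Type*} {n : ℕ} (c : α → Fin n) (s : Finset α)
    (hs : #s < n) : ∃ k, ∀ a ∈ s, c a ≠ k := by
  classical
  obtain ⟨k, -, hk⟩ := exists_mem_notMem_of_card_lt_card (s := s.image c) (t := univ)
    (by simpa using card_image_le.trans_lt hs)
  exact ⟨k, fun a ha hak => hk (hak ▸ mem_image_of_mem c ha)⟩

theorem card_biUnion_incidenceFinset_le [Fintype V] [DecidableEq V] [DecidableRel G.Adj]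
    (s : Finset V) : #(s.biUnion fun w => G.incidenceFinset w) ≤ #s * G.maxDegree :=
  card_biUnion_le_card_mul _ _ _ fun w _ => by
    rw [card_incidenceFinset_eq_degree]
    exact G.degree_le_maxDegree w

section Pendant

variable {v u : V}

theorem eq_of_mem_edgeSet_of_pendant (hpend : ∀ x, G.Adj v x → x = u) {f : Sym2 V}
    (hf : f ∈ G.edgeSet) (hvf : v ∈ f) : f = s(v, u) := by
  obtain ⟨x, rfl⟩ := Sym2.mem_iff_exists.mp hvf
  rw [hpend x hf]

theorem pendant_notMem_edges_of_isCycle (hpend : ∀ x, G.Adj v x → x = u) {a : V}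
    {c : G.Walk a a} (hc : c.IsCycle) : s(v, u) ∉ c.edges := fun he => by
  classical
  have hv : v ∈ c.support := c.fst_mem_support_of_mem_edges he
  have hc' := (Walk.isCycle_rotate hv).mpr hc
  -- both cycle edges at `v` would have to lead to `u`
  exact hc'.snd_ne_penultimate <|
    (hpend _ ((c.rotate v hv).adj_snd hc'.not_nil)).trans
      (hpend _ ((c.rotate v hv).adj_penultimate hc'.not_nil).symm).symm

theorem egirth_deleteEdges_of_pendant (hpend : ∀ x, G.Adj v x → x = u) :
    (G.deleteEdges {s(v, u)}).egirth = G.egirth := by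
  refine le_antisymm (le_egirth.mpr fun a c hc => ?_) (egirth_anti (deleteEdges_le _))
  have hc' : ∀ e ∈ c.edges, e ∉ ({s(v, u)} : Set (Sym2 V)) := fun e he hev =>
    pendant_notMem_edges_of_isCycle hpend hc (Set.mem_singleton_iff.mp hev ▸ he)
  simpa using egirth_le_length (hc.toDeleteEdges _ _ hc')

theorem edgesConflict_deleteEdges_of_pendant (hpend : ∀ x, G.Adj v x → x = u) {p q : Sym2 V}
    (hp : p ∈ G.edgeSet) (hq : q ∈ G.edgeSet) (hpe : p ≠ s(v, u)) (hqe : q ≠ s(v, u))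
    (h : edgesConflict G p q) : edgesConflict (G.deleteEdges {s(v, u)}) p q := by
  obtain ⟨a, b, ha, hb, hab⟩ := h
  refine ⟨a, b, ha, hb, hab.imp_right fun hab => (deleteEdges_adj ..).mpr ⟨hab, fun habe => ?_⟩⟩
  rcases Sym2.eq_iff.mp habe with ⟨rfl, -⟩ | ⟨-, rfl⟩
  · exact hpe (eq_of_mem_edgeSet_of_pendant hpend hp ha)
  · exact hqe (eq_of_mem_edgeSet_of_pendant hpend hq hb)

theorem exists_adj_mem_of_edgesConflict_pendant (hpend : ∀ x, G.Adj v x → x = u) {f : Sym2 V}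
    (hf : f ∈ G.edgeSet) (hfe : f ≠ s(v, u)) (h : edgesConflict G s(v, u) f) :
    ∃ w, G.Adj u w ∧ w ≠ v ∧ w ∈ f := by
  have hvf : v ∉ f := fun hvf => hfe (eq_of_mem_edgeSet_of_pendant hpend hf hvf)
  have of_mem : u ∈ f → ∃ w, G.Adj u w ∧ w ≠ v ∧ w ∈ f := fun huf => by
    obtain ⟨w, rfl⟩ := Sym2.mem_iff_exists.mp huf
    refine ⟨w, hf, fun hwv => hfe ?_, Sym2.mem_mk_right u w⟩
    rw [hwv, Sym2.eq_swap]
  obtain ⟨a, b, ha, hb, hab⟩ := h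
  rcases Sym2.mem_iff.mp ha with rfl | rfl
  · rcases hab with rfl | hab
    · exact absurd hb hvf
    · exact of_mem (hpend b hab ▸ hb)
  · rcases hab with rfl | hab
    · exact of_mem hb
    · exact ⟨b, hab, fun hbv => hvf (hbv ▸ hb), hb⟩

theorem hasStrongEdgeColoring_of_deleteEdges_pendant (hpend : ∀ x, G.Adj v x → x = u) {n : ℕ}
    (c : (G.deleteEdges {s(v, u)}).edgeSet → Fin n) (hc : IsStrongEdgeColoring _ c) (k : Fin n)
    (hk : ∀ f, (∃ w, G.Adj u w ∧ w ≠ v ∧ w ∈ f.1) → c f ≠ k) : HasStrongEdgeColoring G n := by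
  classical
  have mem {f : Sym2 V} (hf : f ∈ G.edgeSet) (hfe : f ≠ s(v, u)) :
      f ∈ (G.deleteEdges {s(v, u)}).edgeSet := by
    simp [edgeSet_deleteEdges, hf, hfe]
  let c' : G.edgeSet → Fin n := fun f => if h : f.1 = s(v, u) then k else c ⟨f.1, mem f.2 h⟩
  have hk' (f : G.edgeSet) (hfe : f.1 ≠ s(v, u)) (h : edgesConflict G s(v, u) f.1) : c' f ≠ k := by
    simpa [c', hfe] using hk _ (exists_adj_mem_of_edgesConflict_pendant hpend f.2 hfe h)
  refine ⟨c', fun e f hne h => ?_⟩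
  by_cases he : e.1 = s(v, u) <;> by_cases hf : f.1 = s(v, u)
  · exact absurd (Subtype.ext (he.trans hf.symm)) hne
  · simpa [c', he] using (hk' f hf (he ▸ h)).symm
  · simpa [c', hf] using hk' e he (hf ▸ edgesConflict_comm.mp h)
  · simp only [c', dif_neg he, dif_neg hf]
    exact hc _ _ (fun hef => hne (Subtype.ext (congrArg Subtype.val hef :)))
      (edgesConflict_deleteEdges_of_pendant hpend e.2 f.2 he hf h)

end Pendant

end SimpleGraph

theorem min_cex_one_vertex_general (V : Type) [Fintype V] (G : SimpleGraph V)
    [DecidableRel G.Adj] (Δ : ℕ)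
    (hplanar : IsPlanar G) (hgirth : 6 ≤ G.girth) (hmax : G.maxDegree = Δ)
    (hcex : ¬ HasStrongEdgeColoring G (3 * Δ + 6))
    (hmin : ∀ (W : Type) [Fintype W] [DecidableEq W] (H : SimpleGraph W)
      [DecidableRel H.Adj], IsPlanar H → 6 ≤ H.girth → H.maxDegree ≤ Δ →
      H.edgeFinset.card < G.edgeFinset.card → HasStrongEdgeColoring H (3 * Δ + 6)) :
    ∀ v, G.degree v = 1 → ∀ u, G.Adj v u → 5 ≤ G.degree u := by
  classical
  intro v hv u hvu
  by_contra! hu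
  have hpend : ∀ x, G.Adj v x → x = u := fun x hx =>
    (degree_eq_one_iff_existsUnique_adj.mp hv).unique hx hvu
  set H := G.deleteEdges {s(v, u)}
  have hHG : H < G := (deleteEdges_le _).lt_of_ne fun h => by
    simpa [hvu] using deleteEdges_eq_self.mp h
  obtain ⟨c, hc⟩ := hmin V H (hplanar.anti (deleteEdges_le _))
    (by rwa [girth, egirth_deleteEdges_of_pendant hpend]) (hmax ▸ maxDegree_mono (deleteEdges_le _))
    (card_lt_card (edgeFinset_strict_mono hHG))
  set T := ((G.neighborFinset u).erase v).biUnion fun w => G.incidenceFinset w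
  have hT : #T < 3 * Δ + 6 := calc
    #T ≤ #((G.neighborFinset u).erase v) * Δ := hmax ▸ card_biUnion_incidenceFinset_le _
    _ = (G.degree u - 1) * Δ := by
      rw [card_erase_of_mem ((mem_neighborFinset ..).mpr hvu.symm), card_neighborFinset_eq_degree]
    _ < 3 * Δ + 6 := (Nat.mul_le_mul_right Δ (by omega : G.degree u - 1 ≤ 3)).trans_lt (by omega)
  obtain ⟨k, hk⟩ := exists_forall_ne_of_card_lt c (T.subtype (· ∈ H.edgeSet))
    ((card_subtype (· ∈ H.edgeSet) T ▸ card_filter_le T _).trans_lt hT)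
  refine hcex (hasStrongEdgeColoring_of_deleteEdges_pendant hpend c hc k
    fun f ⟨w, huw, hwv, hwf⟩ => hk f ?_)
  simpa [T] using ⟨w, ⟨hwv, huw⟩, (edgeSet_mono (deleteEdges_le _) f.2 : f.1 ∈ G.edgeSet), hwf⟩

/-- In a minimal counterexample to "planar, girth ≥ 6, max degree Δ ≥ 4 ⟹ χ'ₛ ≤ 3Δ+6",
every vertex of degree 1 is adjacent to a vertex of degree at least 5. -/
theorem min_cex_one_vertex (V : Type) [Fintype V] [DecidableEq V] (G : SimpleGraph V)
    [DecidableRel G.Adj] (Δ : ℕ)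
    (hplanar : IsPlanar G) (hgirth : 6 ≤ G.girth) (hmax : G.maxDegree = Δ) (hΔ : 4 ≤ Δ)
    (hcex : ¬ HasStrongEdgeColoring G (3 * Δ + 6))
    (hmin : ∀ (W : Type) [Fintype W] [DecidableEq W] (H : SimpleGraph W)
      [DecidableRel H.Adj], IsPlanar H → 6 ≤ H.girth → H.maxDegree ≤ Δ →
      H.edgeFinset.card < G.edgeFinset.card → HasStrongEdgeColoring H (3 * Δ + 6)) :
    ∀ v, G.degree v = 1 → ∀ u, G.Adj v u → 5 ≤ G.degree u :=
  min_cex_one_vertex_general V G Δ hplanar hgirth hmax hcex hmin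
end

section
/- Let G be a minimal counterexample (fewest edges) to the claim that planar graphs of girth ≥ 6 and maximum degree Δ ≥ 4 satisfy χ'_s ≤ 3Δ+6. Then every 2-vertex of G has at least one neighbor of degree at least 5. -/
open SimpleGraph Finset

universe u

variable {V : Type u}

/-!
Let `v` be a 2-vertex whose neighbours `u`, `w` have degree at most 4. Deleting the two edges at `v`
leaves a graph with fewer edges, which is strongly `(3Δ + 6)`-colorable: by minimality, or, when it
is a forest, because forests need only `2Δ + 1` colors. Every other edge conflicting with `vu` is
incident to `w` or to one of the at most 3 neighbours of `u` other than `v`, so fewer than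
`3Δ + 6` edges conflict with `vu`, and likewise with `vw`; both edges can then be colored
greedily.
-/

theorem edgesConflict.symm {G : SimpleGraph V} {e f : Sym2 V} (h : edgesConflict G e f) :
    edgesConflict G f e := by
  obtain ⟨a, b, ha, hb, hab⟩ := h
  exact ⟨b, a, hb, ha, hab.imp Eq.symm SimpleGraph.Adj.symm⟩

theorem edgesConflict.exists_mem_adj {G : SimpleGraph V} {u v : V} {f : Sym2 V}
    (h : edgesConflict G s(u, v) f) (hf : f ∈ G.edgeSet) (hne : f ≠ s(u, v)) :
    ∃ y ∈ f, y ≠ u ∧ y ≠ v ∧ (G.Adj u y ∨ G.Adj v y) := by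
  obtain ⟨a, c, ha, hc, hac⟩ := h
  obtain ⟨c', rfl⟩ := Sym2.mem_iff_exists.mp hc
  rw [SimpleGraph.mem_edgeSet] at hf
  rw [Sym2.mem_iff] at ha
  by_cases hcuv : c = u ∨ c = v
  · have hc' : c' ≠ u ∧ c' ≠ v := by
      rcases hcuv with rfl | rfl <;> refine ⟨?_, ?_⟩ <;> rintro rfl <;> simp_all [Sym2.eq_swap]
    refine ⟨c', Sym2.mem_mk_right c c', hc'.1, hc'.2, ?_⟩
    rcases hcuv with rfl | rfl <;> simp [hf]
  · refine ⟨c, Sym2.mem_mk_left c c', by tauto, by tauto, ?_⟩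
    rcases hac with rfl | hac
    · tauto
    · rcases ha with rfl | rfl <;> simp [hac]

/-- Colorings are total on `Sym2 V`, so that they can be extended one edge at a time with
`Function.update`. -/
def IsStrongEdgeColoringOn (G : SimpleGraph V) (S : Set (Sym2 V)) {n : ℕ} (c : Sym2 V → Fin n) :
    Prop :=
  ∀ e ∈ S, ∀ f ∈ S, e ≠ f → edgesConflict G e f → c e ≠ c f

theorem hasStrongEdgeColoring_iff_isStrongEdgeColoringOn {G : SimpleGraph V} {n : ℕ}
    (hn : 0 < n) :
    HasStrongEdgeColoring G n ↔ ∃ c : Sym2 V → Fin n, IsStrongEdgeColoringOn G G.edgeSet c := by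
  classical
  constructor
  · rintro ⟨c, hc⟩
    refine ⟨fun e => if he : e ∈ G.edgeSet then c ⟨e, he⟩ else ⟨0, hn⟩, ?_⟩
    intro e he f hf hne hef
    simpa [he, hf] using hc ⟨e, he⟩ ⟨f, hf⟩ (by simpa using hne) hef
  · rintro ⟨c, hc⟩
    exact ⟨fun e => c e, fun e f hne => hc e e.2 f f.2 (Subtype.coe_ne_coe.mpr hne)⟩

/-- Once `v` is isolated, no conflict between the remaining edges runs through `v`. -/
theorem IsStrongEdgeColoringOn.of_deleteIncidenceSet {G : SimpleGraph V} {n : ℕ}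
    {c : Sym2 V → Fin n} {v : V}
    (hc : IsStrongEdgeColoringOn (G.deleteIncidenceSet v) (G.deleteIncidenceSet v).edgeSet c) :
    IsStrongEdgeColoringOn G (G.deleteIncidenceSet v).edgeSet c := by
  have hv : ∀ f ∈ (G.deleteIncidenceSet v).edgeSet, ∀ a ∈ f, a ≠ v := by
    rintro f hf a haf rfl
    rw [edgeSet_deleteIncidenceSet] at hf
    exact hf.2 ⟨hf.1, haf⟩
  rintro e he f hf hne ⟨a, b, hae, hbf, hab⟩
  refine hc e he f hf hne ⟨a, b, hae, hbf, hab.imp_right fun hab => ?_⟩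
  exact deleteIncidenceSet_adj.mpr ⟨hab, hv e he a hae, hv f hf b hbf⟩

theorem SimpleGraph.edgeSet_eq_deleteIncidenceSet_union (G : SimpleGraph V) (v : V) :
    G.edgeSet = (G.deleteIncidenceSet v).edgeSet ∪ (s(v, ·)) '' G.neighborSet v := by
  ext e
  induction e using Sym2.ind with
  | _ a b =>
  simp only [edgeSet_deleteIncidenceSet, Set.mem_union, Set.mem_sdiff, Set.mem_image,
    mem_neighborSet, mk'_mem_incidenceSet_iff, mem_edgeSet, Sym2.eq_iff]
  grind [SimpleGraph.Adj.symm]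

section Greedy

variable [Fintype V] [DecidableEq V] {G : SimpleGraph V} [DecidableRel G.Adj] {n : ℕ}

/-- The edges conflicting with `s(u, v)` are incident to a vertex of `(N(u) ∪ N(v)) \ {u, v}`,
so they use fewer than `n` colors and one is left for `s(u, v)`. -/
theorem IsStrongEdgeColoringOn.exists_insert {S : Set (Sym2 V)} {c : Sym2 V → Fin n}
    (hc : IsStrongEdgeColoringOn G S c) (hS : S ⊆ G.edgeSet) {u v : V}
    (hn : ∑ y ∈ (G.neighborFinset u ∪ G.neighborFinset v) \ {u, v}, G.degree y < n) :
    ∃ c' : Sym2 V → Fin n, IsStrongEdgeColoringOn G (insert s(u, v) S) c' := by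
  set T := ((G.neighborFinset u ∪ G.neighborFinset v) \ {u, v}).biUnion (G.incidenceFinset ·)
  have hT : ∀ f ∈ S, f ≠ s(u, v) → edgesConflict G s(u, v) f → f ∈ T := by
    intro f hf hne hconf
    obtain ⟨y, hyf, hyu, hyv, hadj⟩ := hconf.exists_mem_adj (hS hf) hne
    simp only [T, Finset.mem_biUnion, Finset.mem_sdiff, Finset.mem_union, mem_neighborFinset,
      Finset.mem_insert, Finset.mem_singleton, mem_incidenceFinset]
    exact ⟨y, ⟨hadj, by tauto⟩, hS hf, hyf⟩
  have hcard : #(T.image c) < n :=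
    calc #(T.image c) ≤ #T := Finset.card_image_le
      _ ≤ ∑ y ∈ (G.neighborFinset u ∪ G.neighborFinset v) \ {u, v},
            #(G.incidenceFinset y) :=
        Finset.card_biUnion_le
      _ < n := by simpa only [card_incidenceFinset_eq_degree] using hn
  obtain ⟨a, ha⟩ : ∃ a, a ∉ T.image c := by
    simpa [Finset.eq_univ_iff_forall] using
      (Finset.card_lt_iff_ne_univ (T.image c)).mp (by simpa using hcard)
  have hfresh : ∀ f ∈ S, f ≠ s(u, v) → edgesConflict G s(u, v) f → c f ≠ a :=
    fun f hf hne hconf hfa => ha (hfa ▸ Finset.mem_image_of_mem c (hT f hf hne hconf))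
  refine ⟨Function.update c s(u, v) a, fun e he f hf hne hconf => ?_⟩
  have hmem : ∀ g ∈ insert s(u, v) S, g ≠ s(u, v) → g ∈ S :=
    fun g hg hg' => hg.resolve_left hg'
  by_cases heuv : e = s(u, v)
  · subst heuv
    rw [Function.update_self, Function.update_of_ne hne.symm]
    exact (hfresh f (hmem f hf hne.symm) hne.symm hconf).symm
  by_cases hfuv : f = s(u, v)
  · subst hfuv
    rw [Function.update_self, Function.update_of_ne hne]
    exact hfresh e (hmem e he heuv) heuv hconf.symm
  rw [Function.update_of_ne heuv, Function.update_of_ne hfuv]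
  exact hc e (hmem e he heuv) f (hmem f hf hfuv) hne hconf

theorem HasStrongEdgeColoring.of_deleteIncidenceSet {v : V}
    (hH : HasStrongEdgeColoring (G.deleteIncidenceSet v) n) (hn : 0 < n)
    (hv : ∀ x ∈ G.neighborFinset v,
      ∑ y ∈ (G.neighborFinset v ∪ G.neighborFinset x) \ {v, x}, G.degree y < n) :
    HasStrongEdgeColoring G n := by
  obtain ⟨c, hc⟩ := (hasStrongEdgeColoring_iff_isStrongEdgeColoringOn hn).mp hH
  suffices ∀ A ⊆ G.neighborFinset v, ∃ c : Sym2 V → Fin n,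
      IsStrongEdgeColoringOn G ((G.deleteIncidenceSet v).edgeSet ∪ (s(v, ·)) '' A) c by
    obtain ⟨c, hc⟩ := this _ subset_rfl
    rw [coe_neighborFinset, ← edgeSet_eq_deleteIncidenceSet_union] at hc
    exact (hasStrongEdgeColoring_iff_isStrongEdgeColoringOn hn).mpr ⟨c, hc⟩
  intro A hA
  induction A using Finset.induction_on with
  | empty => exact ⟨c, by simpa using hc.of_deleteIncidenceSet⟩
  | insert x A _ ih =>
    obtain ⟨c, hc⟩ := ih ((Finset.subset_insert x A).trans hA)
    have hx := hA (Finset.mem_insert_self x A)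
    have hsub : (G.deleteIncidenceSet v).edgeSet ∪ (s(v, ·)) '' A ⊆ G.edgeSet := by
      rw [edgeSet_eq_deleteIncidenceSet_union G v]
      exact Set.union_subset_union_right _
        (Set.image_mono fun y hy => (mem_neighborFinset ..).mp (hA (Finset.mem_insert_of_mem hy)))
    rw [Finset.coe_insert, Set.image_insert_eq, Set.union_insert]
    exact hc.exists_insert hsub (hv x hx)

end Greedy

theorem HasMinor.mono {W : Type} {G G' : SimpleGraph V} {K : SimpleGraph W} (h : HasMinor G K)
    (hle : G ≤ G') : HasMinor G' K := by
  obtain ⟨b, hne, hconn, hdisj, hadj⟩ := h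
  refine ⟨b, hne, fun w => (hconn w).mono fun _ _ hab => hle hab, hdisj, fun w₁ w₂ hw => ?_⟩
  obtain ⟨a, ha, a', ha', haa'⟩ := hadj hw
  exact ⟨a, ha, a', ha', hle haa'⟩

theorem IsPlanar.anti {G G' : SimpleGraph V} (h : IsPlanar G') (hle : G ≤ G') : IsPlanar G :=
  ⟨fun hm => h.1 (hm.mono hle), fun hm => h.2 (hm.mono hle)⟩

namespace SimpleGraph

/-- Take `p` to be the second vertex of a longest path and `q` the third: every other neighbour of
`p` is a leaf, since otherwise the path could be lengthened. -/
theorem IsAcyclic.exists_adj_forall_adj_ne [Finite V] {G : SimpleGraph V} (hG : G.IsAcyclic)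
    {a b : V} (hab : G.Adj a b) :
    ∃ p q x, G.Adj p x ∧ x ≠ q ∧
      ∀ y, G.Adj p y → y ≠ q → ∀ z, G.Adj y z → z = p := by
  have : Nonempty V := ⟨a⟩
  obtain ⟨s, t, P, hP, hmax⟩ := Walk.exists_isPath_forall_isPath_length_le_length G
  cases P with
  | nil => simpa using hmax _ _ (Walk.cons hab Walk.nil) (by simp [hab.ne])
  | @cons _ p _ hsp P' =>
    rw [Walk.cons_isPath_iff] at hP
    obtain ⟨hP', hs⟩ := hP
    refine ⟨p, P'.snd, s, hsp.symm, fun h => hs (h ▸ P'.getVert_mem_support 1), ?_⟩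
    intro y hpy hyq z hyz
    by_contra hzp
    have hy : y ∉ P'.support := fun hy => hyq (hG.eq_snd_of_adj_start hP' hpy hy)
    have hQ : (Walk.cons hpy.symm P').IsPath := hP'.cons hy
    have hz : z ∉ (Walk.cons hpy.symm P').support :=
      fun hz => hzp (by simpa using hG.eq_snd_of_adj_start hQ hyz hz)
    simpa using hmax _ _ _ (hQ.cons (h := hyz.symm) hz)

variable [Fintype V] [DecidableEq V] {G : SimpleGraph V} [DecidableRel G.Adj]

theorem card_edgeFinset_deleteIncidenceSet_lt {v x : V} (hvx : G.Adj v x) :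
    #(G.deleteIncidenceSet v).edgeFinset < #G.edgeFinset := by
  have : 0 < G.degree v := G.degree_pos_iff_exists_adj v |>.mpr ⟨x, hvx⟩
  have : 0 < #G.edgeFinset := Finset.card_pos.mpr ⟨s(v, x), mem_edgeFinset.mpr hvx⟩
  rw [card_edgeFinset_deleteIncidenceSet]
  omega

theorem sum_degree_neighborFinset_le {p q : V}
    (hleaf : ∀ y, G.Adj p y → y ≠ q → ∀ z, G.Adj y z → z = p) :
    ∑ y ∈ G.neighborFinset p, G.degree y ≤ G.degree p + G.maxDegree :=
  calc ∑ y ∈ G.neighborFinset p, G.degree y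
      ≤ ∑ y ∈ G.neighborFinset p, (1 + if y = q then G.maxDegree else 0) := by
        refine Finset.sum_le_sum fun y hy => ?_
        rw [mem_neighborFinset] at hy
        split_ifs with hyq
        · exact (G.degree_le_maxDegree y).trans (Nat.le_add_left _ _)
        · rw [← card_neighborFinset_eq_degree, add_zero]
          exact Finset.card_le_one.mpr fun z hz z' hz' =>
            (hleaf y hy hyq z ((mem_neighborFinset ..).mp hz)).trans
              (hleaf y hy hyq z' ((mem_neighborFinset ..).mp hz')).symm
    _ ≤ G.degree p + G.maxDegree := by
        rw [Finset.sum_add_distrib, Finset.sum_ite_eq', Finset.sum_const, smul_eq_mul, mul_one,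
          card_neighborFinset_eq_degree]
        split_ifs <;> omega

/-- Delete a leaf edge at the vertex `p` of `IsAcyclic.exists_adj_forall_adj_ne`: it conflicts with
at most `2 * G.maxDegree` edges. -/
theorem IsAcyclic.hasStrongEdgeColoring (hG : G.IsAcyclic) {n : ℕ} (hn : 2 * G.maxDegree < n) :
    HasStrongEdgeColoring G n := by
  induction hm : #G.edgeFinset using Nat.strong_induction_on generalizing G with
  | _ m ih =>
  by_cases hE : G = ⊥
  · subst hE
    exact ⟨fun e => absurd e.2 (by simp), fun e => absurd e.2 (by simp)⟩
  obtain ⟨a, b, hab⟩ := ne_bot_iff_exists_adj.mp hE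
  obtain ⟨p, q, x, hpx, hxq, hleaf⟩ := hG.exists_adj_forall_adj_ne hab
  have hx : ∀ z, G.Adj x z → z = p := hleaf x hpx hxq
  have hH : HasStrongEdgeColoring (G.deleteIncidenceSet x) n :=
    ih _ (hm ▸ card_edgeFinset_deleteIncidenceSet_lt hpx.symm)
      (hG.anti (G.deleteIncidenceSet_le x))
      (by have := maxDegree_mono (G.deleteIncidenceSet_le x); omega) rfl
  refine hH.of_deleteIncidenceSet (by omega) fun y hy => ?_
  obtain rfl := hx y ((mem_neighborFinset ..).mp hy)
  calc ∑ z ∈ (G.neighborFinset x ∪ G.neighborFinset y) \ {x, y}, G.degree z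
      ≤ ∑ z ∈ G.neighborFinset y, G.degree z := by
        refine Finset.sum_le_sum_of_subset fun z hz => ?_
        simp only [Finset.mem_sdiff, Finset.mem_union, Finset.mem_insert, Finset.mem_singleton,
          mem_neighborFinset] at hz
        exact (mem_neighborFinset ..).mpr (hz.1.resolve_left fun hxz => hz.2 (.inr (hx z hxz)))
    _ ≤ G.degree y + G.maxDegree := sum_degree_neighborFinset_le hleaf
    _ < n := by have := G.degree_le_maxDegree y; omega

theorem sum_degree_sdiff_le {v x : V} (hx : G.Adj v x) :
    ∑ y ∈ (G.neighborFinset v ∪ G.neighborFinset x) \ {v, x}, G.degree y ≤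
      ∑ y ∈ (G.neighborFinset v).erase x, G.degree y + (G.degree x - 1) * G.maxDegree :=
  calc ∑ y ∈ (G.neighborFinset v ∪ G.neighborFinset x) \ {v, x}, G.degree y
      ≤ ∑ y ∈ (G.neighborFinset v).erase x ∪ (G.neighborFinset x).erase v, G.degree y := by
        refine Finset.sum_le_sum_of_subset fun y hy => ?_
        simp only [Finset.mem_sdiff, Finset.mem_union, Finset.mem_insert, Finset.mem_singleton,
          Finset.mem_erase] at hy ⊢
        tauto
    _ ≤ ∑ y ∈ (G.neighborFinset v).erase x, G.degree y +
          ∑ y ∈ (G.neighborFinset x).erase v, G.degree y := by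
        rw [← Finset.sum_union_inter]
        exact Nat.le_add_right _ _
    _ ≤ ∑ y ∈ (G.neighborFinset v).erase x, G.degree y + (G.degree x - 1) * G.maxDegree := by
        gcongr
        refine (Finset.sum_le_card_nsmul _ _ _ fun y _ => G.degree_le_maxDegree y).trans_eq ?_
        rw [Finset.card_erase_of_mem ((mem_neighborFinset ..).mpr hx.symm),
          card_neighborFinset_eq_degree, smul_eq_mul]

end SimpleGraph

theorem min_cex_two_vertex_general (V : Type) [Fintype V] [DecidableEq V] (G : SimpleGraph V)
    [DecidableRel G.Adj] (Δ : ℕ)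
    (hplanar : IsPlanar G) (hgirth : 6 ≤ G.girth) (hmax : G.maxDegree = Δ)
    (hcex : ¬ HasStrongEdgeColoring G (3 * Δ + 6))
    (hmin : ∀ (W : Type) [Fintype W] [DecidableEq W] (H : SimpleGraph W)
      [DecidableRel H.Adj], IsPlanar H → 6 ≤ H.girth → H.maxDegree ≤ Δ →
      H.edgeFinset.card < G.edgeFinset.card → HasStrongEdgeColoring H (3 * Δ + 6)) :
    ∀ v, G.degree v = 2 → ∃ u, G.Adj v u ∧ 5 ≤ G.degree u := by
  intro v hv
  by_contra! hsmall
  obtain ⟨u, hvu⟩ := (G.degree_pos_iff_exists_adj v).mp (by omega)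
  have hH : HasStrongEdgeColoring (G.deleteIncidenceSet v) (3 * Δ + 6) := by
    have hle := G.deleteIncidenceSet_le v
    have hdeg : (G.deleteIncidenceSet v).maxDegree ≤ Δ := hmax ▸ maxDegree_mono hle
    -- `girth` is `0` on forests, so minimality does not apply to them
    by_cases hac : (G.deleteIncidenceSet v).IsAcyclic
    · exact hac.hasStrongEdgeColoring (by omega)
    exact hmin V _ (hplanar.anti hle) (hgirth.trans (girth_anti hle hac)) hdeg
      (card_edgeFinset_deleteIncidenceSet_lt hvu)
  refine hcex (hH.of_deleteIncidenceSet (by omega) fun x hx => ?_)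
  rw [mem_neighborFinset] at hx
  have hother : ∑ y ∈ (G.neighborFinset v).erase x, G.degree y ≤ 4 := by
    refine (Finset.sum_le_card_nsmul _ _ 4 fun y hy => ?_).trans_eq ?_
    · exact Nat.le_of_lt_succ (hsmall y ((mem_neighborFinset ..).mp (Finset.mem_of_mem_erase hy)))
    · rw [Finset.card_erase_of_mem ((mem_neighborFinset ..).mpr hx), card_neighborFinset_eq_degree,
        hv, smul_eq_mul]
  have hdegx : (G.degree x - 1) * G.maxDegree ≤ 3 * Δ :=
    hmax ▸ Nat.mul_le_mul_right _ (by have := hsmall x hx; omega)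
  have hsum := sum_degree_sdiff_le hx
  omega

/-- In a minimal counterexample to "planar, girth ≥ 6, max degree Δ ≥ 4 ⟹ χ'ₛ ≤ 3Δ+6",
every vertex of degree 2 has a neighbor of degree at least 5. -/
theorem min_cex_two_vertex (V : Type) [Fintype V] [DecidableEq V] (G : SimpleGraph V)
    [DecidableRel G.Adj] (Δ : ℕ)
    (hplanar : IsPlanar G) (hgirth : 6 ≤ G.girth) (hmax : G.maxDegree = Δ) (hΔ : 4 ≤ Δ)
    (hcex : ¬ HasStrongEdgeColoring G (3 * Δ + 6))
    (hmin : ∀ (W : Type) [Fintype W] [DecidableEq W] (H : SimpleGraph W)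
      [DecidableRel H.Adj], IsPlanar H → 6 ≤ H.girth → H.maxDegree ≤ Δ →
      H.edgeFinset.card < G.edgeFinset.card → HasStrongEdgeColoring H (3 * Δ + 6)) :
    ∀ v, G.degree v = 2 → ∃ u, G.Adj v u ∧ 5 ≤ G.degree u :=
  min_cex_two_vertex_general V G Δ hplanar hgirth hmax hcex hmin
end

section
/- For every odd integer k ≥ 3 and every integer d ≥ 3, let C_k^d be the graph obtained from a cycle of length k by attaching d − 2 pendant leaves to each cycle vertex. Then the strong chromatic index of C_k^d is at least ⌈2k(d−1)/(k−1)⌉. -/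
open SimpleGraph Finset

universe u

variable {V : Type u}

/-- The graph `C_k^d`: a cycle `0, 1, …, k−1` with `d − 2` pendant leaves attached to each
cycle vertex. -/
def cycleWithLeaves (k d : ℕ) : SimpleGraph (Fin k ⊕ Fin k × Fin (d - 2)) :=
  SimpleGraph.fromRel fun x y =>
    match x, y with
    | Sum.inl i, Sum.inl j => (j : ℕ) = ((i : ℕ) + 1) % k
    | Sum.inl i, Sum.inr p => p.1 = i
    | _, _ => False

namespace CWL
open Sum
variable {k d : ℕ}
abbrev Vt (k d : ℕ) := Fin k ⊕ Fin k × Fin (d - 2)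

lemma succ_mod (hk0 : 0 < k) {n : ℕ} (hn : n < k) :
    (n + 1) % k = if n + 1 = k then 0 else n + 1 := by
  split
  · next h => rw [h, Nat.mod_self]
  · exact Nat.mod_eq_of_lt (by omega)

def nx (hk : 3 ≤ k) (i : Fin k) : Fin k := ⟨((i:ℕ)+1) % k, Nat.mod_lt _ (by omega)⟩

lemma nx_ne (hk : 3 ≤ k) (i : Fin k) : nx hk i ≠ i := by
  intro h
  have hv : ((i:ℕ)+1) % k = i := congrArg Fin.val h
  rw [succ_mod (by omega) i.isLt] at hv
  have := i.isLt
  split at hv <;> omega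

lemma nx_inj (hk : 3 ≤ k) {i j : Fin k} (h : nx hk i = nx hk j) : i = j := by
  have hv : ((i:ℕ)+1) % k = ((j:ℕ)+1) % k := congrArg Fin.val h
  rw [succ_mod (by omega) i.isLt, succ_mod (by omega) j.isLt] at hv
  have hi := i.isLt; have hj := j.isLt
  apply Fin.ext
  split at hv <;> split at hv <;> omega

lemma nx_nx_ne (hk : 3 ≤ k) (i : Fin k) : nx hk (nx hk i) ≠ i := by
  intro h
  have hv : (((i:ℕ)+1) % k + 1) % k = (i:ℕ) := congrArg Fin.val h
  have hi := i.isLt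
  by_cases h1 : (i:ℕ) + 1 = k
  · rw [succ_mod (by omega) i.isLt, if_pos h1] at hv
    rw [Nat.mod_eq_of_lt (by omega)] at hv
    omega
  · rw [succ_mod (by omega) i.isLt, if_neg h1,
      succ_mod (by omega) (by omega : (i:ℕ) + 1 < k)] at hv
    split at hv <;> omega

lemma adj_cyc (hk : 3 ≤ k) (i : Fin k) :
    (cycleWithLeaves k d).Adj (inl i) (inl (nx hk i)) := by
  rw [cycleWithLeaves, fromRel_adj]
  refine ⟨fun h => nx_ne hk i (by injection h with h'; exact h'.symm), Or.inl rfl⟩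

lemma adj_pend (i : Fin k) (p : Fin (d - 2)) :
    (cycleWithLeaves k d).Adj (inl i) (inr (i, p)) := by
  rw [cycleWithLeaves, fromRel_adj]
  exact ⟨by simp, Or.inl rfl⟩

lemma edge_form (hk : 3 ≤ k) {e : Sym2 (Vt k d)} (he : e ∈ (cycleWithLeaves k d).edgeSet) :
    (∃ i, e = s(inl i, inl (nx hk i))) ∨ ∃ i p, e = s(inl i, inr (i, p)) := by
  induction e using Sym2.ind with
  | _ x y =>
    rw [SimpleGraph.mem_edgeSet] at he
    rcases x with i | p <;> rcases y with j | q <;>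
      simp only [cycleWithLeaves, fromRel_adj] at he <;> obtain ⟨hne, h | h⟩ := he
    · exact Or.inl ⟨i, by rw [show j = nx hk i from Fin.ext h]⟩
    · exact Or.inl ⟨j, by rw [show i = nx hk j from Fin.ext h, Sym2.eq_swap]⟩
    · obtain ⟨q1, q2⟩ := q
      exact Or.inr ⟨i, q2, by rw [show q1 = i from h]⟩
    · exact h.elim
    · exact h.elim
    · obtain ⟨p1, p2⟩ := p
      exact Or.inr ⟨j, p2, by rw [show p1 = j from h, Sym2.eq_swap]⟩
    · exact h.elim
    · exact h.elim



def rfun (hk : 3 ≤ k) : Vt k d → Vt k d → Fin k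
  | inl i, inl j =>
      if (j:ℕ) = ((i:ℕ)+1) % k then j else if (i:ℕ) = ((j:ℕ)+1) % k then i else min i j
  | inl i, inr _ => i
  | inr _, inl j => j
  | inr p, inr q => min p.1 q.1

lemma rfun_symm (hk : 3 ≤ k) (x y : Vt k d) : rfun hk x y = rfun hk y x := by
  rcases x with i | p <;> rcases y with j | q <;> simp only [rfun]
  · by_cases h1 : (j:ℕ) = ((i:ℕ)+1) % k <;> by_cases h2 : (i:ℕ) = ((j:ℕ)+1) % k
    · exfalso
      exact nx_nx_ne hk i (by
        rw [show nx hk i = j from Fin.ext h1.symm]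
        exact Fin.ext h2.symm)
    · rw [if_pos h1, if_neg h2, if_pos h1]
    · rw [if_neg h1, if_pos h2, if_pos h2]
    · rw [if_neg h1, if_neg h2, if_neg h2, if_neg h1]
      exact min_comm _ _
  · exact min_comm _ _

def rho (hk : 3 ≤ k) : Sym2 (Vt k d) → Fin k := Sym2.lift ⟨fun x y => rfun hk x y, rfun_symm hk⟩

lemma rho_cyc (hk : 3 ≤ k) (i : Fin k) :
    rho hk (s(inl i, inl (nx hk i)) : Sym2 (Vt k d)) = nx hk i := by
  have hc : ((nx hk i : Fin k) : ℕ) = ((i:ℕ)+1) % k := rfl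
  simp only [rho, Sym2.lift_mk, rfun]
  rw [if_pos hc]

lemma rho_pend (hk : 3 ≤ k) (i : Fin k) (p : Fin (d-2)) :
    rho hk (s(inl i, inr (i, p)) : Sym2 (Vt k d)) = i := rfl

lemma conflict_main (hk : 3 ≤ k) {e f : Sym2 (Vt k d)}
    (he : e ∈ (cycleWithLeaves k d).edgeSet) (hf : f ∈ (cycleWithLeaves k d).edgeSet)
    (h : rho hk e = rho hk f ∨ rho hk f = nx hk (rho hk e) ∨ rho hk e = nx hk (rho hk f)) :
    e = f ∨ edgesConflict (cycleWithLeaves k d) e f := by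
  rcases edge_form hk he with ⟨i, rfl⟩ | ⟨i, p, rfl⟩ <;>
    rcases edge_form hk hf with ⟨j, rfl⟩ | ⟨j, q, rfl⟩
  · rw [rho_cyc, rho_cyc] at h
    rcases h with h | h | h
    · rw [nx_inj hk h]
      exact Or.inl rfl
    · refine Or.inr ⟨inl (nx hk i), inl j, Sym2.mem_mk_right _ _, Sym2.mem_mk_left _ _, Or.inl ?_⟩
      rw [nx_inj hk h]
    · refine Or.inr ⟨inl i, inl (nx hk j), Sym2.mem_mk_left _ _, Sym2.mem_mk_right _ _, Or.inl ?_⟩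
      rw [nx_inj hk h]
  · rw [rho_cyc, rho_pend] at h
    rcases h with h | h | h
    · exact Or.inr ⟨inl (nx hk i), inl j, Sym2.mem_mk_right _ _, Sym2.mem_mk_left _ _,
        Or.inl (by rw [h])⟩
    · refine Or.inr ⟨inl (nx hk i), inl j, Sym2.mem_mk_right _ _, Sym2.mem_mk_left _ _,
        Or.inr ?_⟩
      rw [h]
      exact adj_cyc hk (nx hk i)
    · exact Or.inr ⟨inl i, inl j, Sym2.mem_mk_left _ _, Sym2.mem_mk_left _ _,
        Or.inl (by rw [nx_inj hk h])⟩
  · rw [rho_pend, rho_cyc] at h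
    rcases h with h | h | h
    · exact Or.inr ⟨inl i, inl (nx hk j), Sym2.mem_mk_left _ _, Sym2.mem_mk_right _ _,
        Or.inl (by rw [h])⟩
    · exact Or.inr ⟨inl i, inl j, Sym2.mem_mk_left _ _, Sym2.mem_mk_left _ _,
        Or.inl (by rw [nx_inj hk h])⟩
    · refine Or.inr ⟨inl i, inl (nx hk j), Sym2.mem_mk_left _ _, Sym2.mem_mk_right _ _,
        Or.inr ?_⟩
      rw [h]
      exact (adj_cyc hk (nx hk j)).symm
  · rw [rho_pend, rho_pend] at h
    rcases h with h | h | h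
    · exact Or.inr ⟨inl i, inl j, Sym2.mem_mk_left _ _, Sym2.mem_mk_left _ _, Or.inl (by rw [h])⟩
    · refine Or.inr ⟨inl i, inl j, Sym2.mem_mk_left _ _, Sym2.mem_mk_left _ _, Or.inr ?_⟩
      rw [h]
      exact adj_cyc hk i
    · refine Or.inr ⟨inl i, inl j, Sym2.mem_mk_left _ _, Sym2.mem_mk_left _ _, Or.inr ?_⟩
      rw [h]
      exact (adj_cyc hk j).symm

lemma indep_bound (hk : 3 ≤ k) (hodd : Odd k) (S : Finset (Fin k))
    (h : ∀ a ∈ S, ∀ b ∈ S, b ≠ nx hk a) : 2 * S.card ≤ k - 1 := by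
  have hdisj : Disjoint S (S.image (nx hk)) := by
    rw [Finset.disjoint_right]
    intro b hb hbS
    obtain ⟨a, ha, rfl⟩ := mem_image.mp hb
    exact h a ha _ hbS rfl
  have himg : (S.image (nx hk)).card = S.card :=
    card_image_of_injective _ (fun a b hab => nx_inj hk hab)
  have hle : (S ∪ S.image (nx hk)).card ≤ k := by
    simpa using card_le_univ (S ∪ S.image (nx hk))
  rw [card_union_of_disjoint hdisj, himg] at hle
  obtain ⟨m, rfl⟩ := hodd
  omega

lemma class_bound (hk : 3 ≤ k) (hodd : Odd k) {n : ℕ}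
    [Fintype (cycleWithLeaves k d).edgeSet] [DecidableEq (Fin n)]
    {c : (cycleWithLeaves k d).edgeSet → Fin n}
    (hc : IsStrongEdgeColoring (cycleWithLeaves k d) c) (t : Fin n) :
    2 * (univ.filter fun e => c e = t).card ≤ k - 1 := by
  classical
  set F := univ.filter fun e => c e = t with hF
  have hinj : Set.InjOn (fun e : (cycleWithLeaves k d).edgeSet => rho hk e.1) F := by
    intro e he f hf hef
    by_contra hne
    rcases conflict_main hk e.2 f.2 (Or.inl hef) with h | h
    · exact hne (Subtype.ext h)
    · have := hc e f hne h
      rw [(mem_filter.mp he).2, (mem_filter.mp hf).2] at this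
      exact this rfl
  have hcard : F.card = (F.image fun e => rho hk e.1).card := (card_image_of_injOn hinj).symm
  rw [hcard]
  refine indep_bound hk hodd _ ?_
  intro a ha b hb hba
  obtain ⟨e, he, rfl⟩ := mem_image.mp ha
  obtain ⟨f, hf, rfl⟩ := mem_image.mp hb
  rcases conflict_main hk e.2 f.2 (Or.inr (Or.inl hba)) with h | h
  · rw [h] at hba
    exact nx_ne hk _ hba.symm
  · have hne : e ≠ f := by
      rintro rfl
      exact nx_ne hk _ hba.symm
    have := hc e f hne h
    rw [(mem_filter.mp he).2, (mem_filter.mp hf).2] at this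
    exact this rfl

noncomputable def iota (hk : 3 ≤ k) (hd : 3 ≤ d) (x : Fin k × Fin (d - 1)) :
    (cycleWithLeaves k d).edgeSet :=
  if h : (x.2 : ℕ) < d - 2 then
    ⟨s(inl x.1, inr (x.1, ⟨(x.2 : ℕ), h⟩)), (cycleWithLeaves k d).mem_edgeSet.mpr (adj_pend _ _)⟩
  else
    ⟨s(inl x.1, inl (nx hk x.1)), (cycleWithLeaves k d).mem_edgeSet.mpr (adj_cyc hk _)⟩

lemma iota_inj (hk : 3 ≤ k) (hd : 3 ≤ d) : Function.Injective (iota hk hd) := by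
  rintro ⟨i, j⟩ ⟨i', j'⟩ hij
  rw [iota, iota, Subtype.mk_eq_mk] at hij
  split_ifs at hij with h1 h2 h2 <;>
    simp only [Sym2.eq_iff, inl.injEq, inr.injEq, Prod.mk.injEq, Fin.mk.injEq] at hij
  · rcases hij with ⟨rfl, -, hjj⟩ | ⟨ha, -⟩
    · exact Prod.ext rfl (Fin.ext hjj)
    · exact (Sum.inl_ne_inr ha).elim
  · rcases hij with ⟨-, hb⟩ | ⟨-, hb⟩ <;> exact (Sum.inr_ne_inl hb).elim
  · rcases hij with ⟨-, hb⟩ | ⟨hb, -⟩ <;> exact (Sum.inl_ne_inr hb).elim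
  · rcases hij with ⟨rfl, -⟩ | ⟨ha, hb⟩
    · have h1' : ¬ (j:ℕ) < d - 2 := h1
      have h2' : ¬ (j':ℕ) < d - 2 := h2
      have hj := j.isLt
      have hj' := j'.isLt
      exact Prod.ext rfl (Fin.ext (by omega))
    · exact absurd (ha ▸ hb) (nx_nx_ne hk i')

lemma card_edges (hk : 3 ≤ k) (hd : 3 ≤ d) [Fintype (cycleWithLeaves k d).edgeSet] :
    k * (d - 1) ≤ Fintype.card (cycleWithLeaves k d).edgeSet := by
  have := Fintype.card_le_of_injective _ (iota_inj hk hd)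
  simpa using this

end CWL

/-- Lower bound: for odd `k ≥ 3` and `d ≥ 3`, the strong chromatic index of `C_k^d` is at
least `⌈2k(d−1)/(k−1)⌉`. -/
theorem cycleWithLeaves_strong_index_lower (k d : ℕ) (hodd : Odd k) (hk : 3 ≤ k)
    (hd : 3 ≤ d) :
    ⌈(2 * k * (d - 1) : ℚ) / (k - 1)⌉ ≤ (strongChromaticIndex (cycleWithLeaves k d) : ℤ) := by
  classical
  haveI : Fintype (cycleWithLeaves k d).edgeSet := Fintype.ofFinite _
  have hnon : {n | HasStrongEdgeColoring (cycleWithLeaves k d) n}.Nonempty := by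
    refine ⟨Fintype.card (cycleWithLeaves k d).edgeSet, Fintype.equivFin _, ?_⟩
    intro e f hne _ hcf
    exact hne ((Fintype.equivFin _).injective hcf)
  set n := strongChromaticIndex (cycleWithLeaves k d) with hn
  have hmem : HasStrongEdgeColoring (cycleWithLeaves k d) n := Nat.sInf_mem hnon
  obtain ⟨c, hc⟩ := hmem
  have hsum : (univ : Finset (cycleWithLeaves k d).edgeSet).card
      = ∑ t : Fin n, (univ.filter fun e => c e = t).card :=
    card_eq_sum_card_fiberwise (fun e _ => mem_univ (c e))
  have h2 : 2 * Fintype.card (cycleWithLeaves k d).edgeSet ≤ n * (k - 1) := by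
    rw [← card_univ, hsum, Finset.mul_sum]
    calc ∑ t : Fin n, 2 * (univ.filter fun e => c e = t).card
        ≤ ∑ _t : Fin n, (k - 1) := sum_le_sum fun t _ => CWL.class_bound hk hodd hc t
      _ = n * (k - 1) := by simp [mul_comm]
  have hE := CWL.card_edges (d := d) hk hd
  have key : 2 * (k * (d - 1)) ≤ n * (k - 1) :=
    le_trans (Nat.mul_le_mul_left _ hE) h2
  have hk1 : (0:ℚ) < (k:ℚ) - 1 := by
    have : (3:ℚ) ≤ (k:ℚ) := by exact_mod_cast hk
    linarith
  rw [Int.ceil_le, div_le_iff₀ hk1]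
  calc (2 * (k:ℚ) * ((d:ℚ) - 1)) = ((2 * (k * (d - 1)) : ℕ) : ℚ) := by
        push_cast [Nat.cast_sub (by omega : 1 ≤ d)]; ring
    _ ≤ ((n * (k - 1) : ℕ) : ℚ) := by exact_mod_cast key
    _ = ((n : ℤ) : ℚ) * ((k:ℚ) - 1) := by push_cast [Nat.cast_sub (by omega : 1 ≤ k)]; ring
end

section
/- For every odd integer k ≥ 3 and every integer d ≥ 3, the graph C_k^d (a k-cycle with d − 2 pendant leaves attached to each cycle vertex) has strong chromatic index at most ⌈2k(d−2)/(k−1)⌉ + 5. -/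
open SimpleGraph Finset

universe u

variable {V : Type u}

namespace CWLAux

def ell (k m : ℕ) : ℕ := (2 * m + k - 2) / (k - 1)
def NN (k m : ℕ) : ℕ := 2 * m + ell k m
def EE (k m : ℕ) : ℕ := (k - 1) / 2 * ell k m - m
def ee (k m i : ℕ) : ℕ := min (ell k m) (EE k m - ell k m * i)
def SS (k m i : ℕ) : ℕ := m * i + ∑ t ∈ Finset.range i, ee k m t
def gg (k i : ℕ) : ℕ := if i < k - k % 3 then i % 3 else 3 + (i - (k - k % 3))

lemma modeq_eq_of_lt {n a b : ℕ} (h : Nat.ModEq n a b) (ha : a < n) (hb : b < n) : a = b := by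
  rwa [Nat.ModEq, Nat.mod_eq_of_lt ha, Nat.mod_eq_of_lt hb] at h

lemma ell_lb (k m : ℕ) (hk : 3 ≤ k) : 2 * m ≤ (k - 1) * ell k m := by
  have h1 := Nat.div_add_mod (2 * m + k - 2) (k - 1)
  have h2 : (2 * m + k - 2) % (k - 1) < k - 1 := Nat.mod_lt _ (by omega)
  rw [ell]
  generalize hP : (k - 1) * ((2 * m + k - 2) / (k - 1)) = P at h1 ⊢
  omega

lemma ell_ub (k m : ℕ) : (k - 1) * ell k m ≤ 2 * m + k - 2 := by
  rw [ell, mul_comm]; exact Nat.div_mul_le_self _ _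

lemma ell_pos (k m : ℕ) (hk : 3 ≤ k) (hm : 1 ≤ m) : 1 ≤ ell k m := by
  have := ell_lb k m hk
  by_contra h
  push_neg at h
  interval_cases h' : ell k m <;> omega

lemma sum_ee (k m n : ℕ) : ∑ t ∈ Finset.range n, ee k m t = min (EE k m) (ell k m * n) := by
  induction n with
  | zero => simp
  | succ n ih =>
    rw [Finset.sum_range_succ, ih, Nat.mul_succ]
    simp only [ee]
    generalize ell k m * n = a
    omega

lemma EE_le (k m : ℕ) (hk : 3 ≤ k) : EE k m ≤ ell k m * k := by
  rw [EE]
  have : (k - 1) / 2 * ell k m ≤ ell k m * k := by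
    rw [mul_comm]
    exact Nat.mul_le_mul_left _ (by omega)
  omega

lemma m_le_sE (k m : ℕ) (hk : 3 ≤ k) (hodd : Odd k) : m ≤ (k - 1) / 2 * ell k m := by
  obtain ⟨s, hs⟩ := hodd
  have h1 := ell_lb k m hk
  have hs2 : (k - 1) / 2 = s := by omega
  have hk1 : k - 1 = 2 * s := by omega
  rw [hk1, mul_assoc] at h1
  rw [hs2]
  omega

lemma keyId (k m : ℕ) (hk : 3 ≤ k) (hodd : Odd k) :
    SS k m (k - 1) + (m + ee k m (k - 1)) = (k - 1) / 2 * NN k m := by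
  have h1 : SS k m (k - 1) + (m + ee k m (k - 1)) =
      m * k + ∑ t ∈ Finset.range k, ee k m t := by
    have hk' : k = (k - 1) + 1 := by omega
    calc SS k m (k - 1) + (m + ee k m (k - 1))
        = m * ((k-1)+1) + (∑ t ∈ Finset.range (k-1), ee k m t + ee k m (k-1)) := by
          rw [SS]; ring
      _ = m * k + ∑ t ∈ Finset.range k, ee k m t := by
          rw [← Finset.sum_range_succ, ← hk']
  rw [h1, sum_ee, min_eq_left (EE_le k m hk), EE]
  have h2 := m_le_sE k m hk hodd
  obtain ⟨s, hs⟩ := hodd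
  have hs2 : (k - 1) / 2 = s := by omega
  rw [hs2] at h2 ⊢
  zify [h2]
  have hkz : (k : ℤ) = 2 * (s : ℤ) + 1 := by exact_mod_cast congrArg (Nat.cast : ℕ → ℤ) hs
  rw [NN]
  push_cast
  rw [hkz]
  ring

lemma modeq_cases {k a b c : ℕ} (hb : b < k) (hc : a + c < 2 * k)
    (h : Nat.ModEq k b (a + c)) : b = a + c ∨ b + k = a + c := by
  rcases Nat.lt_or_ge (a + c) k with h' | h'
  · left
    exact modeq_eq_of_lt h hb h'
  · right
    have h2 : (a + c) % k = (a + c - k) % k := (Nat.mod_eq_sub_mod h')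
    have h3 : (a + c - k) % k = a + c - k := Nat.mod_eq_of_lt (by omega)
    have : b = a + c - k := by
      rw [Nat.ModEq, Nat.mod_eq_of_lt hb, h2, h3] at h
      exact h
    omega

lemma modeq_linear {k a b : ℕ} (hk : 0 < k) (ha : a < 2 * k) (hb : b < 3 * k)
    (h : Nat.ModEq k a b) :
    b = a ∨ b = a + k ∨ a = b + k ∨ b = a + 2 * k := by
  have e1 := Nat.div_add_mod a k
  have e2 := Nat.div_add_mod b k
  have r1 : a % k < k := Nat.mod_lt _ hk
  have r2 : b % k < k := Nat.mod_lt _ hk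
  have hq1 : a / k < 2 := (Nat.div_lt_iff_lt_mul hk).mpr (by omega)
  have hq2 : b / k < 3 := (Nat.div_lt_iff_lt_mul hk).mpr (by omega)
  have hr : a % k = b % k := h
  set q1 := a / k with hh1
  set q2 := b / k with hh2
  interval_cases q1 <;> interval_cases q2 <;> omega

lemma gg_ne {k a b c : ℕ} (hk : 3 ≤ k) (ha : a < k) (hb : b < k) (hab : a ≠ b)
    (hc : c ≤ 4) (h : Nat.ModEq k (a + 2) (b + c)) : gg k a ≠ gg k b := by
  have hlin := modeq_linear (k := k) (a := a + 2) (b := b + c) (by omega) (by omega)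
    (by omega) h
  simp only [gg]
  split_ifs <;> omega

lemma pendant_ne (k m : ℕ) (hk : 3 ≤ k) (hodd : Odd k) (hm : 1 ≤ m)
    {i₁ i₂ : ℕ} (h1 : i₁ < k) (h2 : i₂ < k) (hmod : Nat.ModEq k i₂ (i₁ + 1))
    {j₁ j₂ : ℕ} (hj1 : j₁ < m) (hj2 : j₂ < m) :
    (SS k m i₁ + j₁) % NN k m ≠ (SS k m i₂ + j₂) % NN k m := by
  have hl1 := ell_pos k m hk hm
  have heel : ee k m i₁ ≤ ell k m := min_le_left _ _
  have heel2 : ee k m (k-1) ≤ ell k m := min_le_left _ _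
  intro hcon
  have hcon' : Nat.ModEq (NN k m) (SS k m i₁ + j₁) (SS k m i₂ + j₂) := hcon
  have hNm : m + 1 ≤ NN k m := by rw [NN]; omega
  rcases modeq_cases h2 (by omega) hmod with hi | hi
  · have hSS : SS k m (i₁ + 1) = SS k m i₁ + (m + ee k m i₁) := by
      rw [SS, SS, Finset.sum_range_succ]; ring
    rw [hi, hSS] at hcon'
    have h3 : Nat.ModEq (NN k m) j₁ (m + ee k m i₁ + j₂) := by
      apply Nat.ModEq.add_left_cancel' (SS k m i₁)
      calc SS k m i₁ + j₁ ≡ SS k m i₁ + (m + ee k m i₁) + j₂ [MOD NN k m] := hcon'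
        _ = SS k m i₁ + (m + ee k m i₁ + j₂) := by ring
    have := modeq_eq_of_lt h3 (by omega) (by rw [NN]; omega)
    omega
  · have hi1 : i₁ = k - 1 := by omega
    have hi2 : i₂ = 0 := by omega
    subst hi1; subst hi2
    have hS0 : SS k m 0 = 0 := by simp [SS]
    rw [hS0] at hcon'
    have key := keyId k m hk hodd
    have h4 : Nat.ModEq (NN k m) (SS k m (k-1) + j₁ + (m + ee k m (k-1)))
        (0 + j₂ + (m + ee k m (k-1))) := hcon'.add_right _
    have h5 : SS k m (k-1) + j₁ + (m + ee k m (k-1)) = (k-1)/2 * NN k m + j₁ := by omega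
    rw [h5] at h4
    have h6 : Nat.ModEq (NN k m) ((k-1)/2 * NN k m + j₁) j₁ := by
      have : Nat.ModEq (NN k m) ((k-1)/2 * NN k m) 0 :=
        Nat.modEq_zero_iff_dvd.mpr ⟨(k-1)/2, mul_comm _ _⟩
      simpa using this.add_right j₁
    have h7 : Nat.ModEq (NN k m) j₁ (j₂ + (m + ee k m (k-1))) := by
      calc j₁ ≡ (k-1)/2 * NN k m + j₁ [MOD NN k m] := h6.symm
        _ ≡ 0 + j₂ + (m + ee k m (k-1)) [MOD NN k m] := h4
        _ = j₂ + (m + ee k m (k-1)) := by ring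
    have := modeq_eq_of_lt h7 (by omega) (by rw [NN]; omega)
    omega

abbrev Vtx (k d : ℕ) := Fin k ⊕ Fin k × Fin (d - 2)

def colPair (k d : ℕ) : Vtx k d → Vtx k d → ℕ
  | .inl i, .inl j =>
      NN k (d-2) +
        (if (j : ℕ) = ((i : ℕ) + 1) % k ∧ ¬ (i : ℕ) = ((j : ℕ) + 1) % k then gg k i
         else if (i : ℕ) = ((j : ℕ) + 1) % k ∧ ¬ (j : ℕ) = ((i : ℕ) + 1) % k then gg k j
         else 0)
  | .inl _, .inr p => (SS k (d-2) p.1 + (p.2 : ℕ)) % NN k (d-2)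
  | .inr p, .inl _ => (SS k (d-2) p.1 + (p.2 : ℕ)) % NN k (d-2)
  | .inr _, .inr _ => 0

lemma colPair_symm (k d : ℕ) (x y : Vtx k d) : colPair k d x y = colPair k d y x := by
  rcases x with i | p <;> rcases y with j | q <;> simp only [colPair]
  congr 1
  split_ifs <;> tauto

def colFun (k d : ℕ) : Sym2 (Vtx k d) → ℕ := Sym2.lift ⟨colPair k d, colPair_symm k d⟩

lemma colFun_mk (k d : ℕ) (x y : Vtx k d) : colFun k d s(x, y) = colPair k d x y :=
  Sym2.lift_mk _ _ _

lemma gg_lt (k i : ℕ) (hk : 3 ≤ k) (hi : i < k) : gg k i < 5 := by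
  simp only [gg]
  have : k % 3 < 3 := by omega
  split_ifs <;> omega

lemma colFun_lt (k d : ℕ) (hk : 3 ≤ k) (hd : 3 ≤ d) (z : Sym2 (Vtx k d)) :
    colFun k d z < NN k (d-2) + 5 := by
  have hN : 0 < NN k (d-2) := by
    rw [NN]; omega
  induction z using Sym2.ind with
  | _ x y =>
    rw [colFun_mk]
    rcases x with i | p <;> rcases y with j | q <;> simp only [colPair]
    · have h1 := gg_lt k i hk i.isLt
      have h2 := gg_lt k j hk j.isLt
      split_ifs <;> omega
    · exact lt_of_lt_of_le (Nat.mod_lt _ hN) (by omega)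
    · exact lt_of_lt_of_le (Nat.mod_lt _ hN) (by omega)
    · omega

lemma edge_form {k d : ℕ} {e : Sym2 (Vtx k d)}
    (he : e ∈ (cycleWithLeaves k d).edgeSet) :
    (∃ i j : Fin k, (j : ℕ) = ((i : ℕ) + 1) % k ∧ e = s(.inl i, .inl j)) ∨
    (∃ p : Fin k × Fin (d-2), e = s(.inl p.1, .inr p)) := by
  induction e using Sym2.ind with
  | _ x y =>
    rw [SimpleGraph.mem_edgeSet, cycleWithLeaves, SimpleGraph.fromRel_adj] at he
    rcases x with i | p <;> rcases y with j | q
    · rcases he.2 with h | h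
      · exact Or.inl ⟨i, j, h, rfl⟩
      · exact Or.inl ⟨j, i, h, Sym2.eq_swap⟩
    · rcases he.2 with h | h
      · exact Or.inr ⟨q, by rw [show q.1 = i from h]⟩
      · exact h.elim
    · rcases he.2 with h | h
      · exact h.elim
      · exact Or.inr ⟨p, by rw [show p.1 = j from h]; exact Sym2.eq_swap⟩
    · rcases he.2 with h | h <;> exact h.elim

lemma fin_modeq {k : ℕ} (x : Fin k) (n : ℕ) (h : (x : ℕ) = n % k) :
    Nat.ModEq k (x : ℕ) n := by
  rw [Nat.ModEq, Nat.mod_eq_of_lt x.isLt, h]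

lemma colFun_cyc {k d : ℕ} (hk : 3 ≤ k) (i j : Fin k) (hij : (j : ℕ) = ((i : ℕ) + 1) % k) :
    colFun k d s(.inl i, .inl j) = NN k (d-2) + gg k (i : ℕ) := by
  rw [colFun_mk]
  simp only [colPair]
  have hB : ¬ (i : ℕ) = ((j : ℕ) + 1) % k := by
    intro h
    have h1 : (i : ℕ) = ((i : ℕ) + 2) % k := by
      calc (i : ℕ) = ((j : ℕ) + 1) % k := h
        _ = (((i : ℕ) + 1) % k + 1) % k := by rw [hij]
        _ = ((i : ℕ) + 1 + 1) % k := Nat.mod_add_mod _ _ _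
        _ = ((i : ℕ) + 2) % k := by ring_nf
    rcases Nat.lt_or_ge ((i : ℕ) + 2) k with h' | h'
    · rw [Nat.mod_eq_of_lt h'] at h1; omega
    · have h2 : ((i:ℕ) + 2) % k = ((i:ℕ) + 2 - k) % k := Nat.mod_eq_sub_mod h'
      have hik := i.isLt
      rw [h2, Nat.mod_eq_of_lt (by omega)] at h1
      omega
  rw [if_pos ⟨hij, hB⟩]

lemma colFun_pen {k d : ℕ} (i : Fin k) (p : Fin k × Fin (d-2)) :
    colFun k d s(.inl i, .inr p) = (SS k (d-2) p.1 + (p.2 : ℕ)) % NN k (d-2) := by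
  rw [colFun_mk]
  rfl

lemma combine {k i₁ i₂ u v δ₁ δ₂ : ℕ} (h1 : δ₁ ≤ 1) (h2 : δ₂ ≤ 1)
    (hu : Nat.ModEq k u (i₁ + δ₁)) (hv : Nat.ModEq k v (i₂ + δ₂))
    (hr : u = v ∨ Nat.ModEq k v (u + 1) ∨ Nat.ModEq k u (v + 1)) :
    ∃ c ≤ 4, Nat.ModEq k (i₁ + 2) (i₂ + c) := by
  rcases hr with rfl | hr | hr
  · refine ⟨δ₂ + (2 - δ₁), by omega, ?_⟩
    have h3 := (hu.symm.trans hv).add_right (2 - δ₁)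
    have e1 : i₁ + δ₁ + (2 - δ₁) = i₁ + 2 := by omega
    have e2 : i₂ + δ₂ + (2 - δ₁) = i₂ + (δ₂ + (2 - δ₁)) := by omega
    rwa [e1, e2] at h3
  · refine ⟨δ₂ + (1 - δ₁), by omega, ?_⟩
    have h3 : Nat.ModEq k (i₁ + δ₁ + 1) (i₂ + δ₂) :=
      ((hu.add_right 1).symm.trans hr.symm).trans hv
    have h4 := h3.add_right (1 - δ₁)
    have e1 : i₁ + δ₁ + 1 + (1 - δ₁) = i₁ + 2 := by omega
    have e2 : i₂ + δ₂ + (1 - δ₁) = i₂ + (δ₂ + (1 - δ₁)) := by omega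
    rw [e1, e2] at h4
    exact h4
  · refine ⟨δ₂ + 1 + (2 - δ₁), by omega, ?_⟩
    have h3 : Nat.ModEq k (i₁ + δ₁) (i₂ + δ₂ + 1) :=
      hu.symm.trans (hr.trans (hv.add_right 1))
    have h4 := h3.add_right (2 - δ₁)
    have e1 : i₁ + δ₁ + (2 - δ₁) = i₁ + 2 := by omega
    have e2 : i₂ + δ₂ + 1 + (2 - δ₁) = i₂ + (δ₂ + 1 + (2 - δ₁)) := by omega
    rw [e1, e2] at h4
    exact h4

lemma rel_of {k d : ℕ} (x y : Fin k)
    (h : (Sum.inl x : Vtx k d) = Sum.inl y ∨ (cycleWithLeaves k d).Adj (.inl x) (.inl y)) :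
    (x : ℕ) = (y : ℕ) ∨ Nat.ModEq k (y : ℕ) ((x : ℕ) + 1) ∨
      Nat.ModEq k (x : ℕ) ((y : ℕ) + 1) := by
  rcases h with h | h
  · left
    rw [Sum.inl.injEq] at h
    rw [h]
  · rw [cycleWithLeaves, SimpleGraph.fromRel_adj] at h
    rcases h.2 with h' | h'
    · exact Or.inr (Or.inl (fin_modeq y _ h'))
    · exact Or.inr (Or.inr (fin_modeq x _ h'))

lemma hrefl0 {k : ℕ} (x : Fin k) : Nat.ModEq k (x : ℕ) ((x : ℕ) + 0) := by
  simp [Nat.ModEq]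

end CWLAux


namespace CWLAux

lemma exists_coloring (k d : ℕ) (hodd : Odd k) (hk : 3 ≤ k) (hd : 3 ≤ d) :
    HasStrongEdgeColoring (cycleWithLeaves k d) (NN k (d-2) + 5) := by
  have hm : 1 ≤ d - 2 := by omega
  have hN : 0 < NN k (d-2) := by rw [NN]; omega
  refine ⟨fun e => ⟨colFun k d e.1, colFun_lt k d hk hd e.1⟩, ?_⟩
  rintro ⟨e, he⟩ ⟨f, hf⟩ hne hconf
  simp only [ne_eq, Subtype.mk.injEq] at hne
  simp only [ne_eq, Fin.mk.injEq]
  rcases edge_form he with ⟨i₁, j₁, hj₁, rfl⟩ | ⟨p₁, rfl⟩ <;>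
    rcases edge_form hf with ⟨i₂, j₂, hj₂, rfl⟩ | ⟨p₂, rfl⟩
  · -- cycle / cycle
    rw [colFun_cyc hk i₁ j₁ hj₁, colFun_cyc hk i₂ j₂ hj₂]
    have hii : (i₁ : ℕ) ≠ (i₂ : ℕ) := by
      intro h
      apply hne
      have hi : i₁ = i₂ := Fin.ext h
      subst hi
      have hj : j₁ = j₂ := Fin.ext (hj₁.trans hj₂.symm)
      rw [hj]
    obtain ⟨a, b, ha, hb, hab⟩ := hconf
    rw [Sym2.mem_iff] at ha hb
    have main : ∃ c ≤ 4, Nat.ModEq k ((i₁ : ℕ) + 2) ((i₂ : ℕ) + c) := by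
      rcases ha with rfl | rfl <;> rcases hb with rfl | rfl
      · exact combine (by omega) (by omega) (hrefl0 i₁) (hrefl0 i₂) (rel_of _ _ hab)
      · exact combine (by omega) (by omega) (hrefl0 i₁) (fin_modeq j₂ _ hj₂)
          (rel_of _ _ hab)
      · exact combine (by omega) (by omega) (fin_modeq j₁ _ hj₁) (hrefl0 i₂)
          (rel_of _ _ hab)
      · exact combine (by omega) (by omega) (fin_modeq j₁ _ hj₁) (fin_modeq j₂ _ hj₂)
          (rel_of _ _ hab)
    obtain ⟨c, hc, hmod⟩ := main
    have := gg_ne hk i₁.isLt i₂.isLt hii hc hmod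
    omega
  · -- cycle / pendant
    rw [colFun_cyc hk i₁ j₁ hj₁, colFun_pen]
    have := Nat.mod_lt (SS k (d-2) p₂.1 + (p₂.2 : ℕ)) hN
    omega
  · -- pendant / cycle
    rw [colFun_cyc hk i₂ j₂ hj₂, colFun_pen]
    have := Nat.mod_lt (SS k (d-2) p₁.1 + (p₁.2 : ℕ)) hN
    omega
  · -- pendant / pendant
    rw [colFun_pen, colFun_pen]
    have hpp : p₁ ≠ p₂ := by
      rintro rfl
      exact hne rfl
    obtain ⟨a, b, ha, hb, hab⟩ := hconf
    rw [Sym2.mem_iff] at ha hb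
    have hrel : (p₁.1 : ℕ) = (p₂.1 : ℕ) ∨ Nat.ModEq k (p₂.1 : ℕ) ((p₁.1 : ℕ) + 1) ∨
        Nat.ModEq k (p₁.1 : ℕ) ((p₂.1 : ℕ) + 1) := by
      rcases ha with rfl | rfl <;> rcases hb with rfl | rfl
      · exact rel_of _ _ hab
      · rcases hab with h | h
        · exact absurd h (by simp)
        · rw [cycleWithLeaves, SimpleGraph.fromRel_adj] at h
          rcases h.2 with h' | h'
          · exact Or.inl (congrArg Fin.val h').symm
          · exact h'.elim
      · rcases hab with h | h
        · exact absurd h (by simp)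
        · rw [cycleWithLeaves, SimpleGraph.fromRel_adj] at h
          rcases h.2 with h' | h'
          · exact h'.elim
          · exact Or.inl (congrArg Fin.val h')
      · rcases hab with h | h
        · rw [Sum.inr.injEq] at h
          exact absurd h hpp
        · rw [cycleWithLeaves, SimpleGraph.fromRel_adj] at h
          rcases h.2 with h' | h' <;> exact h'.elim
    rcases hrel with h | h | h
    · intro hcol
      have hfst : p₁.1 = p₂.1 := Fin.ext h
      have hcol' : Nat.ModEq (NN k (d-2)) (SS k (d-2) p₁.1 + (p₁.2 : ℕ))
          (SS k (d-2) p₁.1 + (p₂.2 : ℕ)) := by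
        rw [← hfst] at hcol
        exact hcol
      have h3 := Nat.ModEq.add_left_cancel' _ hcol'
      have hmlt : (d - 2 : ℕ) < NN k (d-2) := by rw [NN]; omega
      have h4 : (p₁.2 : ℕ) = (p₂.2 : ℕ) :=
        modeq_eq_of_lt h3 (lt_trans p₁.2.isLt hmlt) (lt_trans p₂.2.isLt hmlt)
      exact hpp (Prod.ext hfst (Fin.ext h4))
    · exact pendant_ne k (d-2) hk hodd hm p₁.1.isLt p₂.1.isLt h p₁.2.isLt p₂.2.isLt
    · exact (pendant_ne k (d-2) hk hodd hm p₂.1.isLt p₁.1.isLt h p₂.2.isLt p₁.2.isLt).symm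

end CWLAux

theorem cycleWithLeaves_strong_index_upper' (k d : ℕ) (hodd : Odd k) (hk : 3 ≤ k)
    (hd : 3 ≤ d) :
    (strongChromaticIndex (cycleWithLeaves k d) : ℤ) ≤
      ⌈(2 * k * (d - 2) : ℚ) / (k - 1)⌉ + 5 := by
  have hm : 1 ≤ d - 2 := by omega
  have hub : strongChromaticIndex (cycleWithLeaves k d) ≤ CWLAux.NN k (d-2) + 5 :=
    Nat.sInf_le (CWLAux.exists_coloring k d hodd hk hd)
  have hceil : ⌈(2 * k * (d - 2) : ℚ) / (k - 1)⌉ = (CWLAux.NN k (d-2) : ℤ) := by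
    have hk1 : (0:ℚ) < (k:ℚ) - 1 := by
      have : (3:ℚ) ≤ (k:ℚ) := by exact_mod_cast hk
      linarith
    rw [Int.ceil_eq_iff]
    have h1 := CWLAux.ell_lb k (d-2) hk
    have h1' : 1 ≤ CWLAux.ell k (d-2) := CWLAux.ell_pos k (d-2) hk hm
    have h2 := CWLAux.ell_ub k (d-2)
    set L := CWLAux.ell k (d-2) with hL
    set K := k - 1 with hK
    have hNNe : CWLAux.NN k (d-2) = 2*(d-2) + L := rfl
    have hq1 : 2 * ((d:ℚ) - 2) ≤ (K:ℚ) * (L:ℚ) := by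
      have : 2 * (d - 2 : ℕ) ≤ K * L := h1
      have hq := (Nat.cast_le (α := ℚ)).mpr this
      push_cast at hq
      have hd2 : ((d:ℚ) - 2) = ((d - 2 : ℕ) : ℚ) := by
        have : (2:ℚ) ≤ (d:ℚ) := by exact_mod_cast (by omega : 2 ≤ d)
        push_cast [Nat.cast_sub (by omega : 2 ≤ d)]
        ring
      rw [hd2]
      push_cast
      linarith
    have hq2 : (K:ℚ) * (L:ℚ) ≤ 2 * ((d:ℚ) - 2) + (K:ℚ) - 1 := by
      have h2' : K * L + 1 ≤ 2*(d-2) + K := by omega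
      have hq := (Nat.cast_le (α := ℚ)).mpr h2'
      push_cast at hq
      have hd2 : ((d:ℚ) - 2) = ((d - 2 : ℕ) : ℚ) := by
        push_cast [Nat.cast_sub (by omega : 2 ≤ d)]
        ring
      rw [hd2]
      linarith
    have hkK : (k:ℚ) = (K:ℚ) + 1 := by
      have : k = K + 1 := by omega
      exact_mod_cast this
    have hd2 : ((d:ℚ) - 2) = ((d - 2 : ℕ) : ℚ) := by
      push_cast [Nat.cast_sub (by omega : 2 ≤ d)]
      ring
    constructor
    · rw [lt_div_iff₀ hk1]
      rw [hNNe, hkK]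
      push_cast
      nlinarith [hq2]
    · rw [div_le_iff₀ hk1]
      rw [hNNe, hkK]
      push_cast
      nlinarith [hq1]
  rw [hceil]
  have : (strongChromaticIndex (cycleWithLeaves k d) : ℤ) ≤ (CWLAux.NN k (d-2) : ℤ) + 5 := by
    exact_mod_cast hub
  linarith

/-- Upper bound: for odd `k ≥ 3` and `d ≥ 3`, the strong chromatic index of `C_k^d` is at
most `⌈2k(d−2)/(k−1)⌉ + 5`. -/
theorem cycleWithLeaves_strong_index_upper (k d : ℕ) (hodd : Odd k) (hk : 3 ≤ k)
    (hd : 3 ≤ d) :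
    (strongChromaticIndex (cycleWithLeaves k d) : ℤ) ≤
      ⌈(2 * k * (d - 2) : ℚ) / (k - 1)⌉ + 5 :=
  cycleWithLeaves_strong_index_upper' k d hodd hk hd
end
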